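/- arXiv:2008.13178 — 7 statements merged into one kernel-verified Lean document; each statement's English description precedes it below -/
import Mathlib

section
/- Let M be a module over 𝔰𝔩₂(ℂ) such that h acts diagonalizably on M, every eigenvalue of h on M is a negative real number, and every h-eigenspace is finite-dimensional. Then M is a direct sum of Verma modules: there exists a family (v_i)_{i∈I} of nonzero vectors of M with e·v_i = 0 and h·v_i = n_i·v_i for some negative real numbers n_i, such that M is the internal direct sum of the submodules N_i generated by the v_i, and for each i the vectors f^k·v_i (k ∈ ℕ) form a basis of N_i. -/
/-!
Take a basis `v i` of the primitive vectors (the kernel of `e`) in every `h`-eigenspace. As the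
weight `μ` of a primitive vector is not a natural number, `e ^ k (f ^ k v) = c • v` with
`c ≠ 0`, while `e ^ k` kills `f ^ j v` for `j < k`; this triangularity makes all `f ^ k v i`
linearly independent. Since the weights are bounded above, every weight vector `w` is killed by some
power of `e`. By induction on that power, `e w` lies in the span of the `f`-strings in weight
`μ + 2`, which `e` maps onto from weight `μ`; so `w` differs from a vector of that span by a
primitive vector of weight `μ`, which is a combination of the `v i`.
-/

open LieModule Module Set Submodule

universe u v

section LinearAlgebra

variable {R M : Type*} [Ring R] [AddCommGroup M] [Module R M]

theorem iSupIndep.linearIndependent_sigma {η : Type*} {ιs : η → Type*}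
    {p : η → Submodule R M} (hp : iSupIndep p) {f : ∀ j, ιs j → M}
    (hf : ∀ j, LinearIndependent R (f j))
    (hfp : ∀ j i, f j i ∈ p j) :
    LinearIndependent R fun x : Σ j, ιs j => f x.1 x.2 := by
  have hle : ∀ j, span R (range (f j)) ≤ p j := fun j => span_le.2 (range_subset_iff.2 (hfp j))
  refine linearIndependent_iUnion_finite hf fun j t _ hjt => ?_
  refine (hp j).mono (hle j) (iSup₂_le fun i hi => (hle i).trans ?_)
  exact le_iSup₂ (f := fun i (_ : i ≠ j) => p i) i (ne_of_mem_of_not_mem hi hjt)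

theorem LinearIndependent.iSupIndep_span_range_curry {ι κ : Type*} {g : ι × κ → M}
    (hg : LinearIndependent R g) :
    iSupIndep fun i => span R (range fun k => g (i, k)) := by
  intro i
  have hrow : ∀ j, span R (range fun k => g (j, k)) ≤ span R (g '' {p | p.1 = j}) :=
    fun j => span_mono (by rintro _ ⟨k, rfl⟩; exact ⟨(j, k), rfl, rfl⟩)
  have hrest : ⨆ (j) (_ : j ≠ i), span R (range fun k => g (j, k)) ≤
      span R (g '' {p | p.1 ≠ i}) :=
    iSup₂_le fun j hj => (hrow j).trans
      (span_mono (image_mono fun p (hp : p.1 = j) => (hp ▸ hj : p.1 ≠ i)))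
  exact (hg.disjoint_span_image (s := {p | p.1 = i}) (t := {p | p.1 ≠ i})
    (disjoint_left.2 fun _ hp hp' => hp' hp)).mono (hrow i) hrest

end LinearAlgebra

theorem iSupIndep.exists_linearIndependent_le_span {K : Type*} {η : Type u} {M : Type v}
    [DivisionRing K] [AddCommGroup M] [Module K M] {p : η → Submodule K M} (hp : iSupIndep p) :
    ∃ (I : Type max u v) (v : I → M) (wt : I → η), LinearIndependent K v ∧
      (∀ i, v i ∈ p (wt i)) ∧ ∀ j, p j ≤ span K (v '' {i | wt i = j}) := by
  refine ⟨Σ j, Basis.ofVectorSpaceIndex K (p j), fun i => (i.2 : p i.1), Sigma.fst,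
    hp.linearIndependent_sigma
      (fun j => (Basis.ofVectorSpaceIndex.linearIndependent K (p j)).map' _ (ker_subtype _))
      (fun j x => (x : p j).2),
    fun i => (i.2 : p i.1).2, fun j w hw => ?_⟩
  have hspan : (⟨w, hw⟩ : p j) ∈ span K (Basis.ofVectorSpaceIndex K (p j)) := by
    rw [← Basis.range_ofVectorSpace, (Basis.ofVectorSpace K (p j)).span_eq]
    trivial
  refine span_mono ?_ (apply_mem_span_image_of_mem_span (p j).subtype hspan)
  rintro _ ⟨x, hx, rfl⟩
  exact ⟨⟨j, x, hx⟩, rfl, rfl⟩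

namespace IsSl2Triple.HasPrimitiveVectorWith

variable {R L M : Type*} [CommRing R] [LieRing L] [LieAlgebra R L] [AddCommGroup M] [Module R M]
  [LieRingModule L M] [LieModule R L M] {h e f : L} {t : IsSl2Triple h e f} {m : M} {μ : R}
  (P : t.HasPrimitiveVectorWith m μ)
include P

lemma hasEigenvalue : (toEnd R L M h).HasEigenvalue μ :=
  Module.End.hasEigenvalue_of_hasEigenvector
    ⟨Module.End.mem_eigenspace_iff.2 (by rw [toEnd_apply_apply, P.lie_h]), P.ne_zero⟩

lemma pow_toEnd_e_pow_toEnd_f (k : ℕ) :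
    (toEnd R L M e ^ k) ((toEnd R L M f ^ k) m) =
      (∏ j ∈ Finset.range k, ((j + 1) * (μ - j) : R)) • m := by
  induction k with
  | zero => simp
  | succ k ih =>
    rw [pow_succ, Module.End.mul_apply, toEnd_apply_apply, P.lie_e_pow_succ_toEnd_f, map_smul,
      ih, smul_smul, Finset.prod_range_succ, mul_comm]

lemma pow_toEnd_e_pow_toEnd_f_of_lt {j k : ℕ} (hkj : k < j) :
    (toEnd R L M e ^ j) ((toEnd R L M f ^ k) m) = 0 := by
  obtain ⟨d, rfl⟩ := Nat.exists_eq_add_of_lt hkj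
  rw [add_assoc, add_comm, pow_add, pow_succ, Module.End.mul_apply, Module.End.mul_apply,
    P.pow_toEnd_e_pow_toEnd_f, map_smul, toEnd_apply_apply, P.lie_e, smul_zero, map_zero]

lemma lie_mem_span_range_pow_toEnd_f {n : M}
    (hn : n ∈ span R (range fun k : ℕ => (toEnd R L M f ^ k) m)) :
    ⁅e, n⁆ ∈ span R (range fun k : ℕ => (toEnd R L M f ^ k) m) ∧
      ⁅h, n⁆ ∈ span R (range fun k : ℕ => (toEnd R L M f ^ k) m) ∧
      ⁅f, n⁆ ∈ span R (range fun k : ℕ => (toEnd R L M f ^ k) m) := by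
  set N := span R (range fun k : ℕ => (toEnd R L M f ^ k) m)
  have hmem : ∀ k, (toEnd R L M f ^ k) m ∈ N := fun k => subset_span (mem_range_self k)
  have hstable : ∀ x : L, (∀ k, ⁅x, (toEnd R L M f ^ k) m⁆ ∈ N) → ⁅x, n⁆ ∈ N :=
    fun x hx => (span_le (p := N.comap (toEnd R L M x))).2 (range_subset_iff.2 hx) hn
  refine ⟨hstable e fun k => ?_, hstable h fun k => ?_, hstable f fun k => ?_⟩
  · cases k with
    | zero => simp [P.lie_e]
    | succ k => exact P.lie_e_pow_succ_toEnd_f k ▸ N.smul_mem _ (hmem k)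
  · exact P.lie_h_pow_toEnd_f k ▸ N.smul_mem _ (hmem k)
  · exact P.lie_f_pow_toEnd_f k ▸ hmem (k + 1)

end IsSl2Triple.HasPrimitiveVectorWith

namespace IsSl2Triple

section CommRing

variable {R L M : Type*} [CommRing R] [LieRing L] [LieAlgebra R L] [AddCommGroup M] [Module R M]
  [LieRingModule L M] [LieModule R L M] {h e f : L} (t : IsSl2Triple h e f)
  {ι : Type*} {v : ι → M} {wt : ι → R}

/-- The span of those `f ^ k v i` whose weight `wt i - 2 * k` is `μ`. -/
def fStringSpan (f : L) (v : ι → M) (wt : ι → R) (μ : R) : Submodule R M :=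
  span R ((fun p : ι × ℕ => (toEnd R L M f ^ p.2) (v p.1)) '' {p | wt p.1 = μ + 2 * p.2})

lemma fStringSpan_le_eigenspace (hP : ∀ i, t.HasPrimitiveVectorWith (v i) (wt i)) (μ : R) :
    fStringSpan f v wt μ ≤ (toEnd R L M h).eigenspace μ := by
  refine span_le.2 ?_
  rintro _ ⟨⟨i, k⟩, hik, rfl⟩
  rw [SetLike.mem_coe, Module.End.mem_eigenspace_iff, toEnd_apply_apply,
    (hP i).lie_h_pow_toEnd_f, show wt i = μ + 2 * k from hik, add_sub_cancel_right]

include t in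
lemma pow_toEnd_e_eq_zero_of_not_hasEigenvalue {w : M} {μ : R}
    (hw : w ∈ (toEnd R L M h).eigenspace μ) {j : ℕ}
    (hj : ¬ (toEnd R L M h).HasEigenvalue (μ + 2 * j)) :
    (toEnd R L M e ^ j) w = 0 := by
  by_contra hne
  refine hj (Module.End.hasEigenvalue_of_hasEigenvector ⟨?_, hne⟩)
  rw [Module.End.mem_eigenspace_iff, toEnd_apply_apply]
  exact t.lie_h_pow_toEnd_e (Module.End.mem_eigenspace_iff.1 hw) j

end CommRing

section Field

variable {K L M : Type*} [Field K] [CharZero K] [LieRing L] [LieAlgebra K L] [AddCommGroup M]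
  [Module K M] [LieRingModule L M] [LieModule K L M] {h e f : L} (t : IsSl2Triple h e f)
  {ι : Type*} {v : ι → M} {wt : ι → K}

lemma succ_mul_sub_ne_zero {μ : K} (hμ : ∀ n : ℕ, μ ≠ n) (k : ℕ) :
    ((k + 1) * (μ - k) : K) ≠ 0 :=
  mul_ne_zero (Nat.cast_add_one_ne_zero k) (sub_ne_zero.2 (hμ k))

theorem linearIndependent_pow_toEnd_f (hP : ∀ i, t.HasPrimitiveVectorWith (v i) (wt i))
    (hwt : ∀ i (n : ℕ), wt i ≠ n) (hv : LinearIndependent K v) :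
    LinearIndependent K fun p : ι × ℕ => (toEnd K L M f ^ p.2) (v p.1) := by
  set g := fun p : ι × ℕ => (toEnd K L M f ^ p.2) (v p.1)
  have hrow : ∀ k, LinearIndependent K fun i => (toEnd K L M e ^ k) (g (i, k)) := fun k => by
    convert hv.units_smul fun i => Units.mk0 (∏ j ∈ Finset.range k, ((j + 1) * (wt i - j) : K))
      (Finset.prod_ne_zero_iff.2 fun j _ => succ_mul_sub_ne_zero (hwt i) j) with i
    exact (hP i).pow_toEnd_e_pow_toEnd_f k
  have hlow : ∀ k, span K (g '' {p | p.2 < k}) ≤ LinearMap.ker (toEnd K L M e ^ k) :=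
    fun k => span_le.2 <| image_subset_iff.2 fun p hp =>
      (hP p.1).pow_toEnd_e_pow_toEnd_f_of_lt hp
  have hbelow : ∀ k, LinearIndepOn K g {p | p.2 < k} := by
    intro k
    induction k with
    | zero => simp
    | succ k ih =>
      have hsplit : {p : ι × ℕ | p.2 < k + 1} = {p | p.2 < k} ∪ range (·, k) := by
        ext ⟨i, j⟩
        simp only [mem_ofPred_eq, mem_union, mem_range, Prod.mk.injEq, exists_and_right,
          exists_eq, true_and]
        omega
      have hrange : g '' range (·, k) = range fun i => g (i, k) := (range_comp _ _).symm
      rw [hsplit]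
      refine ih.union ((linearIndepOn_range_iff (Prod.mk_left_injective k) g).2
        (LinearIndependent.of_comp _ (hrow k))) ?_
      rw [hrange]
      exact (range_ker_disjoint (f := toEnd K L M e ^ k) (v := fun i => g (i, k))
        (hrow k)).symm.mono_left (hlow k)
  have hunion : ⋃ k, {p : ι × ℕ | p.2 < k} = univ :=
    iUnion_eq_univ_iff.2 fun p => ⟨p.2 + 1, lt_add_one p.2⟩
  rw [← linearIndepOn_univ_iff, ← hunion]
  exact linearIndepOn_iUnion_of_directed
    (Monotone.directed_le fun _ _ hkl _ hp => lt_of_lt_of_le hp hkl) hbelow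

lemma fStringSpan_add_two_le_map (hP : ∀ i, t.HasPrimitiveVectorWith (v i) (wt i))
    (hwt : ∀ i (n : ℕ), wt i ≠ n) (μ : K) :
    fStringSpan f v wt (μ + 2) ≤ (fStringSpan f v wt μ).map (toEnd K L M e) := by
  refine span_le.2 ?_
  rintro _ ⟨⟨i, k⟩, hik, rfl⟩
  refine ⟨((k + 1) * (wt i - k) : K)⁻¹ • (toEnd K L M f ^ (k + 1)) (v i),
    smul_mem _ _ (subset_span ⟨(i, k + 1), ?_, rfl⟩), ?_⟩
  · simp only [mem_ofPred_eq] at hik ⊢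
    rw [hik]
    push_cast
    ring
  · rw [map_smul, toEnd_apply_apply, (hP i).lie_e_pow_succ_toEnd_f, smul_smul,
      inv_mul_cancel₀ (succ_mul_sub_ne_zero (hwt i) k), one_smul]

lemma mem_fStringSpan_of_pow_toEnd_e_eq_zero
    (hP : ∀ i, t.HasPrimitiveVectorWith (v i) (wt i))
    (hwt : ∀ i (n : ℕ), wt i ≠ n)
    (hker : ∀ μ, LinearMap.ker (toEnd K L M e) ⊓ (toEnd K L M h).eigenspace μ ≤
      span K (v '' {i | wt i = μ}))
    (j : ℕ) {μ : K} {w : M} (hw : w ∈ (toEnd K L M h).eigenspace μ)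
    (hj : (toEnd K L M e ^ j) w = 0) :
    w ∈ fStringSpan f v wt μ := by
  induction j generalizing μ w with
  | zero =>
    rw [pow_zero, Module.End.one_apply] at hj
    exact hj ▸ zero_mem _
  | succ j ih =>
    have hew : ⁅e, w⁆ ∈ (toEnd K L M h).eigenspace (μ + 2) := by
      rw [Module.End.mem_eigenspace_iff, toEnd_apply_apply]
      simpa using t.lie_h_pow_toEnd_e (Module.End.mem_eigenspace_iff.1 hw) 1
    obtain ⟨u, hu, hue⟩ := fStringSpan_add_two_le_map t hP hwt μ
      (ih hew (by rwa [pow_succ, Module.End.mul_apply, toEnd_apply_apply] at hj))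
    have hprim : w - u ∈ span K (v '' {i | wt i = μ}) := by
      refine hker μ ⟨?_, sub_mem hw (fStringSpan_le_eigenspace t hP μ hu)⟩
      rw [SetLike.mem_coe, LinearMap.mem_ker, map_sub, hue, toEnd_apply_apply, sub_self]
    have hspan : span K (v '' {i | wt i = μ}) ≤ fStringSpan f v wt μ :=
      span_mono (by rintro _ ⟨i, hi, rfl⟩; exact ⟨(i, 0), by simpa using hi, by simp⟩)
    simpa using add_mem (hspan hprim) hu

theorem iSup_span_range_pow_toEnd_f_eq_top (hP : ∀ i, t.HasPrimitiveVectorWith (v i) (wt i))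
    (hwt : ∀ i (n : ℕ), wt i ≠ n)
    (hker : ∀ μ, LinearMap.ker (toEnd K L M e) ⊓ (toEnd K L M h).eigenspace μ ≤
      span K (v '' {i | wt i = μ}))
    (hdiag : ⨆ μ, (toEnd K L M h).eigenspace μ = ⊤)
    (hnil : ∀ μ, ∃ j : ℕ, ¬ (toEnd K L M h).HasEigenvalue (μ + 2 * j)) :
    ⨆ i, span K (range fun k : ℕ => (toEnd K L M f ^ k) (v i)) = ⊤ := by
  rw [eq_top_iff, ← hdiag]
  refine iSup_le fun μ w hw => ?_
  obtain ⟨j, hj⟩ := hnil μ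
  have hU : fStringSpan f v wt μ ≤
      ⨆ i, span K (range fun k : ℕ => (toEnd K L M f ^ k) (v i)) := by
    refine span_le.2 ?_
    rintro _ ⟨⟨i, k⟩, _, rfl⟩
    exact le_iSup (fun i => span K _) i (subset_span ⟨k, rfl⟩)
  exact hU (mem_fStringSpan_of_pow_toEnd_e_eq_zero t hP hwt hker j hw
    (t.pow_toEnd_e_eq_zero_of_not_hasEigenvalue hw hj))

end Field

end IsSl2Triple

namespace Module.End

variable {M : Type*} [AddCommGroup M] [Module ℂ M] (T : Module.End ℂ M)
  (hneg : ∀ μ : ℂ, T.HasEigenvalue μ → ∃ r : ℝ, r < 0 ∧ μ = r)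
include hneg

lemma not_hasEigenvalue_natCast (k : ℕ) : ¬ T.HasEigenvalue k := fun hk => by
  obtain ⟨r, hr, hkr⟩ := hneg _ hk
  have : (k : ℝ) = r := by exact_mod_cast hkr
  linarith [k.cast_nonneg (α := ℝ)]

lemma exists_not_hasEigenvalue_add_two_mul (μ : ℂ) :
    ∃ j : ℕ, ¬ T.HasEigenvalue (μ + 2 * j) := by
  obtain ⟨j, hj⟩ := exists_nat_ge (-μ.re / 2)
  refine ⟨j, fun hev => ?_⟩
  obtain ⟨r, hr, hμr⟩ := hneg _ hev
  have hre := congrArg Complex.re hμr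
  simp only [Complex.add_re, Complex.mul_re, Complex.ofReal_re] at hre
  norm_num at hre
  linarith

end Module.End

theorem sl2_module_is_direct_sum_of_verma_modules_general
    (M : Type) [AddCommGroup M] [Module ℂ M]
    (E H F : Module.End ℂ M)
    (hHE : ⁅H, E⁆ = (2 : ℂ) • E)
    (hHF : ⁅H, F⁆ = -((2 : ℂ) • F))
    (hEF : ⁅E, F⁆ = H)
    (hdiag : (⨆ μ : ℂ, H.eigenspace μ) = ⊤)
    (hneg : ∀ μ : ℂ, Module.End.HasEigenvalue H μ → ∃ r : ℝ, r < 0 ∧ μ = (r : ℂ)) :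
    ∃ (I : Type) (v : I → M) (n : I → ℝ),
      (∀ i, v i ≠ 0) ∧
      (∀ i, n i < 0) ∧
      (∀ i, E (v i) = 0) ∧
      (∀ i, H (v i) = ((n i : ℂ)) • v i) ∧
      -- the vectors `f^k · v i` form a basis of
      -- `N i = span {f^k · v i}`, the submodule generated by `v i`:
      (∀ i, LinearIndependent ℂ (fun k : ℕ => (F ^ k) (v i))) ∧
      (∀ i, ∀ m ∈ Submodule.span ℂ (Set.range fun k : ℕ => (F ^ k) (v i)),
          E m ∈ Submodule.span ℂ (Set.range fun k : ℕ => (F ^ k) (v i)) ∧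
          H m ∈ Submodule.span ℂ (Set.range fun k : ℕ => (F ^ k) (v i)) ∧
          F m ∈ Submodule.span ℂ (Set.range fun k : ℕ => (F ^ k) (v i))) ∧
      -- `M` is the internal direct sum of the submodules `N i`:
      iSupIndep (fun i => Submodule.span ℂ (Set.range fun k : ℕ => (F ^ k) (v i))) ∧
      (⨆ i, Submodule.span ℂ (Set.range fun k : ℕ => (F ^ k) (v i))) = ⊤ := by
  rcases subsingleton_or_nontrivial M with hM | hM
  · exact ⟨Empty, isEmptyElim, isEmptyElim, isEmptyElim, isEmptyElim, isEmptyElim, isEmptyElim,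
      isEmptyElim, isEmptyElim, iSupIndep_subsingleton _, Subsingleton.elim _ _⟩
  have hH : H ≠ 0 := by
    rintro rfl
    exact Module.End.not_hasEigenvalue_natCast 0 hneg 0 (by simp [Module.End.hasEigenvalue_iff])
  -- Mathlib makes the commutator Lie ring structure on `Module.End ℂ M` only a local instance.
  let _ : LieRing (Module.End ℂ M) := LieRing.ofAssociativeRing
  have t : IsSl2Triple H E F :=
    ⟨hH, hEF, by rw [hHE, two_smul, two_nsmul], by rw [hHF, two_smul, two_nsmul]⟩
  obtain ⟨I, v, wt, hv, hvP, hker⟩ := iSupIndep.exists_linearIndependent_le_span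
    (H.eigenspaces_iSupIndep.mono fun μ => inf_le_right (a := LinearMap.ker E))
  have hP : ∀ i, t.HasPrimitiveVectorWith (v i) (wt i) := fun i =>
    ⟨hv.ne_zero i, Module.End.mem_eigenspace_iff.1 (hvP i).2, (hvP i).1⟩
  have hwt : ∀ i (k : ℕ), wt i ≠ k := fun i k hk =>
    H.not_hasEigenvalue_natCast hneg k (hk ▸ (hP i).hasEigenvalue)
  choose n hn hwtn using fun i => hneg _ (hP i).hasEigenvalue
  have hLI := t.linearIndependent_pow_toEnd_f hP hwt hv
  exact ⟨I, v, n, hv.ne_zero, hn, fun i => (hP i).lie_e, fun i => hwtn i ▸ (hP i).lie_h,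
    fun i => hLI.comp (fun k => (i, k)) (Prod.mk_right_injective i),
    fun i m hm => (hP i).lie_mem_span_range_pow_toEnd_f hm, hLI.iSupIndep_span_range_curry,
    t.iSup_span_range_pow_toEnd_f_eq_top hP hwt hker hdiag
      (H.exists_not_hasEigenvalue_add_two_mul hneg)⟩

/-- An `𝔰𝔩₂(ℂ)`-module on which `h` acts diagonalizably with negative real
eigenvalues and finite-dimensional eigenspaces is a direct sum of Verma modules. -/
theorem sl2_module_is_direct_sum_of_verma_modules
    (M : Type) [AddCommGroup M] [Module ℂ M]
    (E H F : Module.End ℂ M)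
    (hHE : ⁅H, E⁆ = (2 : ℂ) • E)
    (hHF : ⁅H, F⁆ = -((2 : ℂ) • F))
    (hEF : ⁅E, F⁆ = H)
    (hdiag : (⨆ μ : ℂ, H.eigenspace μ) = ⊤)
    (hneg : ∀ μ : ℂ, Module.End.HasEigenvalue H μ → ∃ r : ℝ, r < 0 ∧ μ = (r : ℂ))
    (hfin : ∀ μ : ℂ, FiniteDimensional ℂ (H.eigenspace μ)) :
    ∃ (I : Type) (v : I → M) (n : I → ℝ),
      (∀ i, v i ≠ 0) ∧
      (∀ i, n i < 0) ∧
      (∀ i, E (v i) = 0) ∧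
      (∀ i, H (v i) = ((n i : ℂ)) • v i) ∧
      -- the vectors `f^k · v i` form a basis of
      -- `N i = span {f^k · v i}`, the submodule generated by `v i`:
      (∀ i, LinearIndependent ℂ (fun k : ℕ => (F ^ k) (v i))) ∧
      (∀ i, ∀ m ∈ Submodule.span ℂ (Set.range fun k : ℕ => (F ^ k) (v i)),
          E m ∈ Submodule.span ℂ (Set.range fun k : ℕ => (F ^ k) (v i)) ∧
          H m ∈ Submodule.span ℂ (Set.range fun k : ℕ => (F ^ k) (v i)) ∧
          F m ∈ Submodule.span ℂ (Set.range fun k : ℕ => (F ^ k) (v i))) ∧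
      -- `M` is the internal direct sum of the submodules `N i`:
      iSupIndep (fun i => Submodule.span ℂ (Set.range fun k : ℕ => (F ^ k) (v i))) ∧
      (⨆ i, Submodule.span ℂ (Set.range fun k : ℕ => (F ^ k) (v i))) = ⊤ :=
  sl2_module_is_direct_sum_of_verma_modules_general M E H F hHE hHF hEF hdiag hneg
end

section
/- Let 𝔤 be a finite-dimensional simple Lie algebra over ℂ equipped with a nondegenerate invariant symmetric bilinear form B. Let x ∈ 𝔤 be such that ad x is diagonalizable with all eigenvalues in ½ℤ, and let f ∈ 𝔤 satisfy [x,f] = -f. Assume that every eigenvalue of ad x on the centralizer 𝔤^f = {v ∈ 𝔤 : [f,v] = 0} is ≤ 0, and that B(x,v) = 0 for every v ∈ 𝔤^f with [x,v] = 0. Then (𝔤,x,f) is a Dynkin datum: there exists e ∈ 𝔤 such that [x,e] = e and [e,f] = 2x, i.e. (e, 2x, f) is an sl(2)-triple with x = h/2. -/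
/-! The image `W = ad f (𝔤₁)` of the `1`-eigenspace of `ad x` lies in `𝔤₀`, and it suffices to
show `x ∈ W`: then `x = [f, u]` with `[x, u] = u`, and `e = -2u` works. As `B` is symmetric and
nondegenerate, `W = W^⊥⊥`, so we need `B(x, v) = 0` for every `v ⊥ W`. Invariance makes `𝔤_μ`
orthogonal to `𝔤_ν` unless `μ + ν = 0`, so `v` may be replaced by its `𝔤₀`-component `v₀`. Then
`B(u, [f, v₀]) = -B([f, u], v₀) = 0` for all `u ∈ 𝔤₁`, and since `𝔤_{-1}` pairs nondegenerately
with `𝔤₁` this forces `[f, v₀] = 0`; the orthogonality hypothesis now gives `B(x, v₀) = 0`. -/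

open LieAlgebra Module.End

section

variable {K L : Type*} [Field K] [LieRing L] [LieAlgebra K L]

lemma lie_mem_eigenspace_ad_add {x f w : L} {c μ : K} (hxf : ⁅x, f⁆ = c • f)
    (hw : w ∈ eigenspace (ad K L x) μ) : ⁅f, w⁆ ∈ eigenspace (ad K L x) (μ + c) := by
  rw [mem_eigenspace_iff, ad_apply] at hw ⊢
  rw [leibniz_lie, hxf, hw, smul_lie, lie_smul, add_smul, add_comm]

lemma self_mem_eigenspace_ad_zero (x : L) : x ∈ eigenspace (ad K L x) 0 := by
  rw [mem_eigenspace_iff, ad_apply, lie_self, zero_smul]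

variable {B : LinearMap.BilinForm K L}

lemma LinearMap.BilinForm.lieInvariant_of_assoc (hB : ∀ a b c : L, B ⁅a, b⁆ c = B a ⁅b, c⁆) :
    B.lieInvariant L := by
  intro x a b
  rw [← hB, ← lie_skew, map_neg, LinearMap.neg_apply]

lemma apply_eq_zero_of_mem_eigenspace_ad (hB : B.lieInvariant L) {x a b : L} {μ ν : K}
    (hμν : μ + ν ≠ 0) (ha : a ∈ eigenspace (ad K L x) μ) (hb : b ∈ eigenspace (ad K L x) ν) :
    B a b = 0 := by
  have h := hB x a b
  rw [mem_eigenspace_iff, ad_apply] at ha hb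
  rw [ha, hb, map_smul, LinearMap.smul_apply, map_smul, smul_eq_mul, smul_eq_mul] at h
  exact (mul_eq_zero.mp (by linear_combination h : (μ + ν) * B a b = 0)).resolve_left hμν

lemma iSup_eigenspace_ad_ne_zero_le_ker (hB : B.lieInvariant L) {x a : L}
    (ha : a ∈ eigenspace (ad K L x) 0) :
    ⨆ (μ) (_ : μ ≠ 0), eigenspace (ad K L x) μ ≤ LinearMap.ker (B a) :=
  iSup₂_le fun _ hμ _ hb ↦ apply_eq_zero_of_mem_eigenspace_ad hB (by rwa [zero_add]) ha hb

lemma eq_zero_of_apply_eigenspace_ad_neg_eq_zero (hB : B.lieInvariant L)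
    (hBnd : LinearMap.SeparatingRight B) {x w : L} {ν : K}
    (hdiag : ⨆ μ, eigenspace (ad K L x) μ = ⊤) (hw : w ∈ eigenspace (ad K L x) ν)
    (h : ∀ u ∈ eigenspace (ad K L x) (-ν), B u w = 0) : w = 0 := by
  refine hBnd w fun u ↦ ?_
  have hle : ⨆ μ, eigenspace (ad K L x) μ ≤ LinearMap.ker (B.flip w) := by
    refine iSup_le fun μ u hu ↦ ?_
    by_cases hμ : μ = -ν
    · exact h u (hμ ▸ hu)
    · exact apply_eq_zero_of_mem_eigenspace_ad hB
        (fun h' ↦ hμ (eq_neg_of_add_eq_zero_left h')) hu hw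
  exact hle (hdiag ▸ Submodule.mem_top)

variable (hB : B.lieInvariant L) {x f : L} (hdiag : ⨆ μ, eigenspace (ad K L x) μ = ⊤)
  (hxf : ⁅x, f⁆ = -f)
include hB hdiag hxf

lemma lie_eq_zero_of_mem_orthogonal_map_eigenspace_ad_one (hBnd : LinearMap.SeparatingRight B)
    {v : L} (hv₀ : v ∈ eigenspace (ad K L x) 0)
    (hv : v ∈ B.orthogonal ((eigenspace (ad K L x) 1).map (ad K L f))) : ⁅f, v⁆ = 0 := by
  have hfv : ⁅f, v⁆ ∈ eigenspace (ad K L x) (-1) := by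
    simpa only [zero_add] using lie_mem_eigenspace_ad_add (c := -1) (by rwa [neg_one_smul]) hv₀
  refine eq_zero_of_apply_eigenspace_ad_neg_eq_zero hB hBnd hdiag hfv fun u hu ↦ ?_
  rw [neg_neg] at hu
  have : B ⁅f, u⁆ v = 0 := hv _ (Submodule.mem_map_of_mem hu)
  rwa [hB, neg_eq_zero] at this

theorem mem_map_ad_eigenspace_one_of_orthogonal_centralizer [FiniteDimensional K L]
    (hBsymm : B.IsSymm) (hBnd : B.Nondegenerate)
    (horth : ∀ v : L, ⁅f, v⁆ = 0 → ⁅x, v⁆ = 0 → B x v = 0) :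
    x ∈ (eigenspace (ad K L x) 1).map (ad K L f) := by
  set W := (eigenspace (ad K L x) 1).map (ad K L f)
  rw [← LinearMap.BilinForm.orthogonal_orthogonal hBnd hBsymm.isRefl W]
  intro v hv
  have hv_mem : v ∈ eigenspace (ad K L x) 0 ⊔ ⨆ (μ) (_ : μ ≠ 0), eigenspace (ad K L x) μ := by
    rw [← iSup_split_single, hdiag]
    exact Submodule.mem_top
  obtain ⟨v₀, hv₀, v', hv', rfl⟩ := Submodule.mem_sup.mp hv_mem
  have hv₀W : v₀ ∈ B.orthogonal W := by
    rintro _ ⟨u, hu : u ∈ eigenspace (ad K L x) 1, rfl⟩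
    have hfu : ⁅f, u⁆ ∈ eigenspace (ad K L x) 0 := by
      simpa only [add_neg_cancel] using
        lie_mem_eigenspace_ad_add (c := -1) (by rwa [neg_one_smul]) hu
    have : B ⁅f, u⁆ (v₀ + v') = 0 := hv _ ⟨u, hu, rfl⟩
    rwa [map_add, iSup_eigenspace_ad_ne_zero_le_ker hB hfu hv', add_zero] at this
  have hfv₀ := lie_eq_zero_of_mem_orthogonal_map_eigenspace_ad_one hB hdiag hxf hBnd.2 hv₀ hv₀W
  have hxv₀ : ⁅x, v₀⁆ = 0 := by rw [← ad_apply (R := K), mem_eigenspace_iff.mp hv₀, zero_smul]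
  change B (v₀ + v') x = 0
  rw [hBsymm.eq, map_add, horth v₀ hfv₀ hxv₀,
    iSup_eigenspace_ad_ne_zero_le_ker hB (self_mem_eigenspace_ad_zero x) hv', add_zero]

end

theorem dynkin_datum_of_orthogonal_to_centralizer_general
    (L : Type) [LieRing L] [LieAlgebra ℂ L] [FiniteDimensional ℂ L]
    (B : L →ₗ[ℂ] L →ₗ[ℂ] ℂ)
    (hBsymm : ∀ a b : L, B a b = B b a)
    (hBinv : ∀ a b c : L, B ⁅a, b⁆ c = B a ⁅b, c⁆)
    (hBnd : ∀ a : L, (∀ b : L, B a b = 0) → a = 0)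
    (x f : L)
    (hdiag : (⨆ μ : ℂ, Module.End.eigenspace (LieAlgebra.ad ℂ L x) μ) = ⊤)
    (hxf : ⁅x, f⁆ = -f)
    (horth : ∀ v : L, ⁅f, v⁆ = 0 → ⁅x, v⁆ = 0 → B x v = 0) :
    ∃ e : L, ⁅x, e⁆ = e ∧ ⁅e, f⁆ = (2 : ℂ) • x := by
  have hBsymm' : LinearMap.BilinForm.IsSymm B := ⟨hBsymm⟩
  have hBnd' : LinearMap.BilinForm.Nondegenerate B :=
    (LinearMap.IsRefl.nondegenerate_iff_separatingLeft hBsymm'.isRefl).mpr hBnd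
  obtain ⟨u, hu : u ∈ eigenspace _ 1, hux⟩ := mem_map_ad_eigenspace_one_of_orthogonal_centralizer
    (LinearMap.BilinForm.lieInvariant_of_assoc hBinv) hdiag hxf hBsymm' hBnd' horth
  rw [mem_eigenspace_iff, ad_apply, one_smul] at hu
  rw [ad_apply] at hux
  refine ⟨-(2 : ℂ) • u, ?_, ?_⟩
  · rw [lie_smul, hu]
  · rw [smul_lie, ← lie_skew, hux, neg_smul, smul_neg, neg_neg]

/-- If `𝔤` is a finite-dimensional simple complex Lie algebra with a nondegenerate
invariant symmetric bilinear form `B`, `ad x` is diagonalizable with eigenvalues in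
`½ℤ`, `[x,f] = -f`, all eigenvalues of `ad x` on the centralizer `𝔤^f` are `≤ 0`, and
`x` is `B`-orthogonal to every `v ∈ 𝔤^f` with `[x,v] = 0`, then `(𝔤,x,f)` is a Dynkin
datum: there is `e` with `[x,e] = e` and `[e,f] = 2x`. -/
theorem dynkin_datum_of_orthogonal_to_centralizer
    (L : Type) [LieRing L] [LieAlgebra ℂ L] [FiniteDimensional ℂ L]
    [LieAlgebra.IsSimple ℂ L]
    (B : L →ₗ[ℂ] L →ₗ[ℂ] ℂ)
    (hBsymm : ∀ a b : L, B a b = B b a)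
    (hBinv : ∀ a b c : L, B ⁅a, b⁆ c = B a ⁅b, c⁆)
    (hBnd : ∀ a : L, (∀ b : L, B a b = 0) → a = 0)
    (x f : L)
    (hdiag : (⨆ μ : ℂ, Module.End.eigenspace (LieAlgebra.ad ℂ L x) μ) = ⊤)
    (hhalf : ∀ μ : ℂ, Module.End.HasEigenvalue (LieAlgebra.ad ℂ L x) μ →
        ∃ n : ℤ, μ = (n : ℂ) / 2)
    (hxf : ⁅x, f⁆ = -f)
    (hnonpos : ∀ (μ : ℂ) (v : L), v ≠ 0 → ⁅f, v⁆ = 0 → ⁅x, v⁆ = μ • v →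
        ∃ r : ℝ, r ≤ 0 ∧ μ = (r : ℂ))
    (horth : ∀ v : L, ⁅f, v⁆ = 0 → ⁅x, v⁆ = 0 → B x v = 0) :
    ∃ e : L, ⁅x, e⁆ = e ∧ ⁅e, f⁆ = (2 : ℂ) • x :=
  dynkin_datum_of_orthogonal_to_centralizer_general L B hBsymm hBinv hBnd x f hdiag hxf horth
end

section
/- Let 𝔤 be a finite-dimensional Lie algebra over ℂ equipped with a nondegenerate invariant symmetric bilinear form B, let (e,h,f) be an sl(2)-triple in 𝔤, and let n be a positive integer. Consider the bilinear form ⟨a,b⟩ = B((ad f)^n a, b) on the eigenspace 𝔤_n = {a ∈ 𝔤 : [h,a] = n·a}. Then: (i) ⟨·,·⟩ is nondegenerate on 𝔤_n; (ii) ⟨b,a⟩ = (-1)^n ⟨a,b⟩ for all a,b ∈ 𝔤_n, i.e. the form is symmetric if n is even and skew-symmetric if n is odd; (iii) for every v ∈ 𝔤 with [h,v] = 0 and [f,v] = 0 one has ⟨[v,a],b⟩ + ⟨a,[v,b]⟩ = 0 for all a,b ∈ 𝔤_n. -/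
open Module LieAlgebra LieModule
set_option linter.unusedSectionVars false
set_option maxHeartbeats 1000000

namespace Sl2Work

variable {L : Type} [LieRing L] [LieAlgebra ℂ L]
variable {e h f : L}

lemma lie_ef (hef : ⁅e, f⁆ = h) (x : L) :
    ⁅e, ⁅f, x⁆⁆ = ⁅f, ⁅e, x⁆⁆ + ⁅h, x⁆ := by
  rw [leibniz_lie, hef]; abel

lemma shift_f (hhf : ⁅h, f⁆ = -((2 : ℂ) • f)) (x : L) :
    ⁅h, ⁅f, x⁆⁆ = ⁅f, ⁅h, x⁆⁆ - (2 : ℂ) • ⁅f, x⁆ := by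
  rw [leibniz_lie, hhf]; simp only [neg_lie, smul_lie]; module

lemma shift_e (hhe : ⁅h, e⁆ = (2 : ℂ) • e) (x : L) :
    ⁅h, ⁅e, x⁆⁆ = ⁅e, ⁅h, x⁆⁆ + (2 : ℂ) • ⁅e, x⁆ := by
  rw [leibniz_lie, hhe, smul_lie]; abel

lemma adf_pow_succ (j : ℕ) (x : L) :
    ((ad ℂ L f) ^ (j+1)) x = ⁅f, ((ad ℂ L f) ^ j) x⁆ := by
  rw [pow_succ', Module.End.mul_apply, ad_apply]

lemma ade_pow_succ (j : ℕ) (x : L) :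
    ((ad ℂ L e) ^ (j+1)) x = ⁅e, ((ad ℂ L e) ^ j) x⁆ := by
  rw [pow_succ', Module.End.mul_apply, ad_apply]

lemma shift_f_pow (hhf : ⁅h, f⁆ = -((2 : ℂ) • f)) {μ : ℂ} {x : L} (hx : ⁅h, x⁆ = μ • x) :
    ∀ j : ℕ, ⁅h, ((ad ℂ L f) ^ j) x⁆ = (μ - 2 * j) • ((ad ℂ L f) ^ j) x := by
  intro j
  induction j with
  | zero => simpa using hx
  | succ j ih => rw [adf_pow_succ, shift_f hhf, ih, lie_smul]; push_cast; module

lemma shift_e_pow (hhe : ⁅h, e⁆ = (2 : ℂ) • e) {μ : ℂ} {x : L} (hx : ⁅h, x⁆ = μ • x) :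
    ∀ j : ℕ, ⁅h, ((ad ℂ L e) ^ j) x⁆ = (μ + 2 * j) • ((ad ℂ L e) ^ j) x := by
  intro j
  induction j with
  | zero => simpa using hx
  | succ j ih => rw [ade_pow_succ, shift_e hhe, ih, lie_smul]; push_cast; module

lemma key (hhf : ⁅h, f⁆ = -((2 : ℂ) • f)) (hef : ⁅e, f⁆ = h) :
    ∀ (k : ℕ) (x : L),
      ⁅e, ((ad ℂ L f) ^ (k+1)) x⁆ =
        ((ad ℂ L f) ^ (k+1)) ⁅e, x⁆ + ((k : ℂ) + 1) • ((ad ℂ L f) ^ k) ⁅h, x⁆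
          - ((k : ℂ) * ((k : ℂ) + 1)) • ((ad ℂ L f) ^ k) x := by
  intro k
  induction k with
  | zero =>
    intro x
    simp only [pow_one, pow_zero, Module.End.one_apply, ad_apply, Nat.cast_zero, zero_add,
      one_smul, zero_mul, zero_smul, sub_zero]
    exact lie_ef hef x
  | succ k ih =>
    intro x
    have h1 : ∀ y : L, ((ad ℂ L f) ^ (k+1+1)) y = ((ad ℂ L f) ^ (k+1)) ⁅f, y⁆ := by
      intro y; rw [pow_succ, Module.End.mul_apply, ad_apply]
    have h2 : ∀ y : L, ((ad ℂ L f) ^ (k+1)) y = ((ad ℂ L f) ^ k) ⁅f, y⁆ := by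
      intro y; rw [pow_succ, Module.End.mul_apply, ad_apply]
    rw [h1 x, ih ⁅f, x⁆, lie_ef hef x, shift_f hhf x, map_add, map_sub, map_smul,
      ← h1 ⁅e,x⁆, ← h2 ⁅h,x⁆, ← h2 x]
    push_cast
    module

lemma no_infinite_eigen [FiniteDimensional ℂ L] (σ : ℕ → ℂ) (hσ : Function.Injective σ)
    (w : ℕ → L) (hw : ∀ j, w j ≠ 0) (hwe : ∀ j, ⁅h, w j⁆ = σ j • w j) : False := by
  have hli := (ad ℂ L h).eigenvectors_linearIndependent' σ hσ w
    (fun j => ⟨Module.End.mem_eigenspace_iff.mpr (by rw [ad_apply, hwe j]), hw j⟩)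
  exact Module.Finite.not_linearIndependent_of_infinite w hli

lemma cast_inj_aux (c : ℂ) : Function.Injective (fun j : ℕ => c + 2 * (j : ℂ)) := by
  intro i j hij
  simp only at hij
  have h2 : (i : ℂ) = j := by linear_combination hij / 2
  exact_mod_cast h2

lemma cast_inj_aux' (c : ℂ) : Function.Injective (fun j : ℕ => c - 2 * (j : ℂ)) := by
  intro i j hij
  simp only at hij
  have h2 : (i : ℂ) = j := by linear_combination -hij / 2
  exact_mod_cast h2

lemma chain_e (hhe : ⁅h, e⁆ = (2 : ℂ) • e) {μ : ℂ} {v m : L} (hv : ⁅h, v⁆ = μ • v + m) :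
    ∀ i : ℕ, ⁅h, ((ad ℂ L e) ^ i) v⁆ =
      (μ + 2 * i) • ((ad ℂ L e) ^ i) v + ((ad ℂ L e) ^ i) m := by
  intro i
  induction i with
  | zero => simpa using hv
  | succ i ih =>
    rw [ade_pow_succ, shift_e hhe, ih, lie_add, lie_smul, ← ade_pow_succ, ← ade_pow_succ]
    push_cast
    module

lemma chain_f (hhf : ⁅h, f⁆ = -((2 : ℂ) • f)) {μ : ℂ} {v m : L} (hv : ⁅h, v⁆ = μ • v + m) :
    ∀ i : ℕ, ⁅h, ((ad ℂ L f) ^ i) v⁆ =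
      (μ - 2 * i) • ((ad ℂ L f) ^ i) v + ((ad ℂ L f) ^ i) m := by
  intro i
  induction i with
  | zero => simpa using hv
  | succ i ih =>
    rw [adf_pow_succ, shift_f hhf, ih, lie_add, lie_smul, ← adf_pow_succ, ← adf_pow_succ]
    push_cast
    module

lemma e_pow_kill {m : L} (hme : ⁅e, m⁆ = 0) : ∀ i : ℕ, ((ad ℂ L e) ^ (i+1)) m = 0 := by
  intro i
  rw [pow_succ, Module.End.mul_apply, ad_apply, hme, map_zero]

/-- no Jordan pair with primitive tail. -/
lemma no_jordan_core [FiniteDimensional ℂ L] (hhe : ⁅h, e⁆ = (2 : ℂ) • e)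
    (hhf : ⁅h, f⁆ = -((2 : ℂ) • f)) (hef : ⁅e, f⁆ = h) (ht : IsSl2Triple h e f)
    {μ : ℂ} {m : L} (hm0 : m ≠ 0) (hm : ⁅h, m⁆ = μ • m) (hme : ⁅e, m⁆ = 0) :
    ∀ (r : ℕ) (v : L), ((ad ℂ L e) ^ r) v = 0 → ⁅h, v⁆ = μ • v + m → False := by
  classical
  have P : ht.HasPrimitiveVectorWith m μ := ⟨hm0, hm, hme⟩
  obtain ⟨N, hN⟩ := P.exists_nat
  have Fne : ∀ i, i ≤ N → ((ad ℂ L f) ^ i) m ≠ 0 := fun i hi =>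
    P.pow_toEnd_f_ne_zero_of_eq_nat hN hi
  have FzN : ((ad ℂ L f) ^ (N+1)) m = 0 := P.pow_toEnd_f_eq_zero_of_eq_nat hN
  have Fz : ∀ i, N + 1 ≤ i → ((ad ℂ L f) ^ i) m = 0 := by
    intro i hi
    obtain ⟨j, rfl⟩ : ∃ j, i = j + (N + 1) := ⟨i - (N+1), by omega⟩
    rw [pow_add, Module.End.mul_apply, FzN, map_zero]
  intro r
  induction r with
  | zero =>
    intro v h0 hv
    rw [pow_zero, Module.End.one_apply] at h0
    rw [h0, lie_zero, smul_zero, zero_add] at hv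
    exact hm0 hv.symm
  | succ r IH =>
    intro v hE hv
    by_cases hr : ((ad ℂ L e) ^ r) v = 0
    · exact IH v hr hv
    have hEv := chain_e hhe hv
    cases r with
    | zero =>
      -- v ≠ 0 and ⁅e, v⁆ = 0 : the F-string argument
      have hv0 : v ≠ 0 := by simpa using hr
      have hev : ⁅e, v⁆ = 0 := by
        have := hE; rw [pow_one] at this; simpa using this
      have hFv := chain_f hhf hv
      have hexK : ∃ K, ((ad ℂ L f) ^ K) v = 0 := by
        by_contra hcon
        push_neg at hcon
        refine no_infinite_eigen (h := h) (fun i => (μ - 2 * ((N+1:ℕ):ℂ)) - 2 * (i:ℂ))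
          (cast_inj_aux' _) (fun i => ((ad ℂ L f) ^ (N+1+i)) v) (fun i => hcon _) (fun i => ?_)
        rw [hFv (N+1+i), Fz (N+1+i) (by omega), add_zero]
        push_cast
        ring_nf
      have hK0 : ((ad ℂ L f) ^ (Nat.find hexK)) v = 0 := Nat.find_spec hexK
      obtain ⟨k', hk'⟩ : ∃ k', Nat.find hexK = k' + 1 := by
        refine ⟨Nat.find hexK - 1, ?_⟩
        have : Nat.find hexK ≠ 0 := by
          intro hz
          rw [hz, pow_zero, Module.End.one_apply] at hK0
          exact hv0 hK0
        omega
      rw [hk'] at hK0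
      have hKmin : ((ad ℂ L f) ^ k') v ≠ 0 := by
        intro hz
        exact absurd (Nat.find_min' hexK hz) (by omega)
      have hkey := key hhf hef k' v
      rw [hK0, lie_zero, hev, map_zero, hv] at hkey
      have hmain : (μ - (k' : ℂ)) • ((ad ℂ L f) ^ k') v + ((ad ℂ L f) ^ k') m = 0 := by
        have hscaled : ((k' : ℂ) + 1) •
            ((μ - (k' : ℂ)) • ((ad ℂ L f) ^ k') v + ((ad ℂ L f) ^ k') m) = 0 := by
          rw [map_add, map_smul] at hkey
          linear_combination (norm := module) -hkey
        rcases smul_eq_zero.mp hscaled with hc | hx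
        · exact absurd hc (Nat.cast_add_one_ne_zero k')
        · exact hx
      by_cases hkN : k' = N
      · apply Fne N le_rfl
        have hz : μ - (k' : ℂ) = 0 := by rw [hN, hkN]; ring
        rw [hz, zero_smul, zero_add] at hmain
        rw [← hkN]
        exact hmain
      · have hμk : μ - (k' : ℂ) ≠ 0 := by
          rw [hN]
          intro hz
          have hNk : (N : ℂ) = (k' : ℂ) := sub_eq_zero.mp hz
          exact hkN (by exact_mod_cast hNk.symm)
        have h5 : (μ - (k' : ℂ)) • ((ad ℂ L f) ^ (k'+1)) v + ((ad ℂ L f) ^ (k'+1)) m = 0 := by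
          have := congrArg (fun y => ⁅f, y⁆) hmain
          simp only [lie_add, lie_smul, lie_zero] at this
          rw [← adf_pow_succ, ← adf_pow_succ] at this
          exact this
        rw [hK0, smul_zero, zero_add] at h5
        have hgt : ¬ (k' + 1 ≤ N) := fun hle => Fne (k'+1) hle h5
        have hFk'm : ((ad ℂ L f) ^ k') m = 0 := Fz k' (by omega)
        rw [hFk'm, add_zero] at hmain
        exact hKmin ((smul_eq_zero.mp hmain).resolve_left hμk)
    | succ r' =>
      -- correction step
      set p := ((ad ℂ L e) ^ (r'+1)) v with hp
      have hp0 : p ≠ 0 := hr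
      have hpe : ⁅e, p⁆ = 0 := by rw [hp, ← ade_pow_succ]; exact hE
      have hph : ⁅h, p⁆ = (μ + 2 * ((r'+1 : ℕ) : ℂ)) • p := by
        rw [hp, hEv (r'+1), e_pow_kill hme r', add_zero]
      have Pp : ht.HasPrimitiveVectorWith p (μ + 2 * ((r'+1 : ℕ) : ℂ)) := ⟨hp0, hph, hpe⟩
      set ν := μ + 2 * ((r'+1 : ℕ) : ℂ) with hν
      have hEF : ∀ j : ℕ, ((ad ℂ L e) ^ j) (((ad ℂ L f) ^ j) p) =
          (∏ i ∈ Finset.range j, (((i : ℂ) + 1) * (ν - (i : ℂ)))) • p := by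
        intro j
        induction j with
        | zero => simp
        | succ j ihj =>
          have hstep : ⁅e, ((ad ℂ L f) ^ (j+1)) p⁆ =
              (((j : ℂ) + 1) * (ν - (j : ℂ))) • ((ad ℂ L f) ^ j) p := by
            have := Pp.lie_e_pow_succ_toEnd_f j
            push_cast at this ⊢
            exact this
          calc ((ad ℂ L e) ^ (j+1)) (((ad ℂ L f) ^ (j+1)) p)
              = ((ad ℂ L e) ^ j) ⁅e, ((ad ℂ L f) ^ (j+1)) p⁆ := by
                rw [pow_succ, Module.End.mul_apply, ad_apply]
            _ = (((j : ℂ) + 1) * (ν - (j : ℂ))) • ((ad ℂ L e) ^ j) (((ad ℂ L f) ^ j) p) := by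
                rw [hstep, map_smul]
            _ = (∏ i ∈ Finset.range (j+1), (((i : ℂ) + 1) * (ν - (i : ℂ)))) • p := by
                rw [ihj, smul_smul, Finset.prod_range_succ,
                  mul_comm ((((j : ℕ) : ℂ) + 1) * (ν - ((j : ℕ) : ℂ)))]
      have hsne : (∏ i ∈ Finset.range (r'+1), (((i : ℂ) + 1) * (ν - (i : ℂ)))) ≠ 0 := by
        rw [Finset.prod_ne_zero_iff]
        intro i hi
        have hi' : i < r' + 1 := Finset.mem_range.mp hi
        refine mul_ne_zero (Nat.cast_add_one_ne_zero i) ?_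
        have : ν - (i : ℂ) = ((N + 2 * (r'+1) - i : ℕ) : ℂ) := by
          rw [hν, hN]
          have : i ≤ N + 2 * (r'+1) := by omega
          push_cast [Nat.cast_sub this]
          ring
        rw [this]
        have : 0 < N + 2 * (r'+1) - i := by omega
        exact_mod_cast Nat.cast_pos.mpr this |>.ne'
      set s := (∏ i ∈ Finset.range (r'+1), (((i : ℂ) + 1) * (ν - (i : ℂ)))) with hs
      set v' := v - s⁻¹ • ((ad ℂ L f) ^ (r'+1)) p with hv'
      have hv'E : ((ad ℂ L e) ^ (r'+1)) v' = 0 := by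
        rw [hv', map_sub, map_smul, hEF (r'+1), ← hs, smul_smul, inv_mul_cancel₀ hsne,
          one_smul, ← hp, sub_self]
      have hv'h : ⁅h, v'⁆ = μ • v' + m := by
        have hFrp : ⁅h, ((ad ℂ L f) ^ (r'+1)) p⁆ = μ • ((ad ℂ L f) ^ (r'+1)) p := by
          rw [shift_f_pow hhf hph (r'+1)]
          congr 1
          rw [hν]
          push_cast
          ring
        rw [hv', lie_sub, lie_smul, hv, hFrp]
        module
      exact IH v' hv'E hv'h


/-- no Jordan pair with primitive tail (existence of `r` supplied internally). -/
lemma no_jordan_prim [FiniteDimensional ℂ L] (hhe : ⁅h, e⁆ = (2 : ℂ) • e)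
    (hhf : ⁅h, f⁆ = -((2 : ℂ) • f)) (hef : ⁅e, f⁆ = h) (ht : IsSl2Triple h e f)
    {μ : ℂ} {m v : L} (hm0 : m ≠ 0) (hm : ⁅h, m⁆ = μ • m) (hme : ⁅e, m⁆ = 0)
    (hv : ⁅h, v⁆ = μ • v + m) : False := by
  have hEv := chain_e hhe hv
  have hex : ∃ r, ((ad ℂ L e) ^ r) v = 0 := by
    by_contra hcon
    push_neg at hcon
    refine no_infinite_eigen (h := h) (fun i => (μ + 2 * ((1:ℕ):ℂ)) + 2 * (i : ℂ))
      (cast_inj_aux _) (fun i => ((ad ℂ L e) ^ (i+1)) v) (fun i => hcon _) (fun i => ?_)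
    rw [hEv (i+1), e_pow_kill hme i, add_zero]
    push_cast
    ring_nf
  obtain ⟨r, hr⟩ := hex
  exact no_jordan_core hhe hhf hef ht hm0 hm hme r v hr hv

/-- no Jordan blocks at all: any Jordan pair is trivial. -/
lemma no_jordan [FiniteDimensional ℂ L] (hhe : ⁅h, e⁆ = (2 : ℂ) • e)
    (hhf : ⁅h, f⁆ = -((2 : ℂ) • f)) (hef : ⁅e, f⁆ = h) (ht : IsSl2Triple h e f)
    {μ : ℂ} {m v : L} (hm0 : m ≠ 0) (hm : ⁅h, m⁆ = μ • m)
    (hv : ⁅h, v⁆ = μ • v + m) : False := by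
  classical
  have hmE := shift_e_pow hhe hm
  have hex : ∃ j, ((ad ℂ L e) ^ (j+1)) m = 0 := by
    by_contra hcon
    push_neg at hcon
    have hw : ∀ j, ((ad ℂ L e) ^ j) m ≠ 0 := by
      intro j
      cases j with
      | zero => simpa using hm0
      | succ t => exact hcon t
    exact no_infinite_eigen (h := h) (fun j => μ + 2 * (j : ℂ)) (cast_inj_aux _)
      (fun j => ((ad ℂ L e) ^ j) m) hw (fun j => hmE j)
  have hj0 : ((ad ℂ L e) ^ (Nat.find hex + 1)) m = 0 := Nat.find_spec hex
  have hm'0 : ((ad ℂ L e) ^ (Nat.find hex)) m ≠ 0 := by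
    rcases Nat.eq_zero_or_pos (Nat.find hex) with hz | hpos
    · rw [hz]; simpa using hm0
    · obtain ⟨t, ht'⟩ : ∃ t, Nat.find hex = t + 1 := ⟨Nat.find hex - 1, by omega⟩
      rw [ht']
      exact Nat.find_min hex (by omega)
  refine no_jordan_prim hhe hhf hef ht (μ := μ + 2 * ((Nat.find hex : ℕ) : ℂ))
    (m := ((ad ℂ L e) ^ (Nat.find hex)) m) (v := ((ad ℂ L e) ^ (Nat.find hex)) v)
    hm'0 (hmE _) ?_ (chain_e hhe hv _)
  rw [← ade_pow_succ]
  exact hj0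

/-- the decomposition we need : `ker (ad h - μ) ⊔ range (ad h - μ) = ⊤`. -/
lemma ker_sup_range [FiniteDimensional ℂ L] (hhe : ⁅h, e⁆ = (2 : ℂ) • e)
    (hhf : ⁅h, f⁆ = -((2 : ℂ) • f)) (hef : ⁅e, f⁆ = h) (ht : IsSl2Triple h e f) (μ : ℂ) :
    LinearMap.ker ((ad ℂ L h : Module.End ℂ L) - μ • 1) ⊔
      LinearMap.range ((ad ℂ L h : Module.End ℂ L) - μ • 1) = ⊤ := by
  set T : Module.End ℂ L := (ad ℂ L h : Module.End ℂ L) - μ • 1 with hT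
  have hTapp : ∀ x : L, T x = ⁅h, x⁆ - μ • x := by
    intro x
    simp [hT, LinearMap.sub_apply, LinearMap.smul_apply]
  have hTT : ∀ w : L, T (T w) = 0 → T w = 0 := by
    intro w hw
    by_contra hne
    refine no_jordan hhe hhf hef ht (μ := μ) (m := T w) (v := w) hne ?_ ?_
    · have h1 := hTapp (T w)
      rw [hw] at h1
      have h2 : ⁅h, T w⁆ - μ • T w = 0 := by rw [← h1]
      linear_combination (norm := module) h2
    · rw [hTapp w]
      module
  have hinf : LinearMap.ker T ⊓ LinearMap.range T = ⊥ := by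
    rw [eq_bot_iff]
    rintro x ⟨hker, y, rfl⟩
    have : T y = 0 := hTT y hker
    simp [this]
  have hdim := LinearMap.finrank_range_add_finrank_ker T
  have hsup := Submodule.finrank_sup_add_finrank_inf_eq (LinearMap.ker T) (LinearMap.range T)
  rw [hinf, finrank_bot, add_zero] at hsup
  apply Submodule.eq_top_of_finrank_eq
  rw [hsup]
  omega

/-- injectivity of `(ad f)^n` on the `n`-eigenspace of `ad h`. -/
lemma f_pow_inj [FiniteDimensional ℂ L] (hhe : ⁅h, e⁆ = (2 : ℂ) • e)
    (hhf : ⁅h, f⁆ = -((2 : ℂ) • f)) (hef : ⁅e, f⁆ = h) (n : ℕ) (a : L)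
    (ha : ⁅h, a⁆ = (n : ℂ) • a) (h0 : ((ad ℂ L f) ^ n) a = 0) : a = 0 := by
  by_contra hne
  classical
  have hex : ∃ k, ((ad ℂ L f) ^ k) a = 0 := ⟨n, h0⟩
  have hk0 : ((ad ℂ L f) ^ (Nat.find hex)) a = 0 := Nat.find_spec hex
  have hkn : Nat.find hex ≤ n := Nat.find_min' hex h0
  obtain ⟨k', hk'⟩ : ∃ k', Nat.find hex = k' + 1 := by
    refine ⟨Nat.find hex - 1, ?_⟩
    have : Nat.find hex ≠ 0 := by
      intro hzero
      rw [hzero, pow_zero, Module.End.one_apply] at hk0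
      exact hne hk0
    omega
  have hk'n : k' + 1 ≤ n := hk' ▸ hkn
  rw [hk'] at hk0
  have hkmin : ((ad ℂ L f) ^ k') a ≠ 0 := by
    intro hz
    exact absurd (Nat.find_min' hex hz) (by omega)
  -- the invariant
  have inv : ∀ j : ℕ, ⁅h, ((ad ℂ L e) ^ j) a⁆ = ((n : ℂ) + 2 * j) • ((ad ℂ L e) ^ j) a ∧
      ((ad ℂ L f) ^ (k' + j + 1)) (((ad ℂ L e) ^ j) a) = 0 ∧
      ((ad ℂ L f) ^ (k' + j)) (((ad ℂ L e) ^ j) a) ≠ 0 := by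
    intro j
    induction j with
    | zero =>
      refine ⟨by simpa using ha, by simpa using hk0, by simpa using hkmin⟩
    | succ j ih =>
      obtain ⟨ih1, ih2, ih3⟩ := ih
      set w := ((ad ℂ L e) ^ j) a with hw
      have hEw : ((ad ℂ L e) ^ (j+1)) a = ⁅e, w⁆ := ade_pow_succ j a
      -- key identity at exponent k'+j+1 applied to w
      have hkey := key hhf hef (k' + j) w
      rw [ih2, ih1] at hkey
      -- 0 = F^{k'+j+1} ⁅e,w⁆ + c • F^{k'+j} w
      have hc : (((k' + j : ℕ) : ℂ) + 1) * (((n : ℂ) + 2 * j) - ((k' + j : ℕ) : ℂ)) ≠ 0 := by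
        have h1 : (((k' + j : ℕ) : ℂ) + 1) ≠ 0 := by
          exact_mod_cast (Nat.cast_add_one_ne_zero (R := ℂ) (k' + j))
        have h2 : ((n : ℂ) + 2 * j) - ((k' + j : ℕ) : ℂ) = ((n + j - k' : ℕ) : ℂ) := by
          have : k' ≤ n + j := by omega
          push_cast [Nat.cast_sub this]
          ring
        have h3 : ((n + j - k' : ℕ) : ℂ) ≠ 0 := by
          have : 0 < n + j - k' := by omega
          exact_mod_cast Nat.cast_pos.mpr this |>.ne'
        rw [h2]
        exact mul_ne_zero h1 h3
      have heq : ((ad ℂ L f) ^ (k' + j + 1)) ⁅e, w⁆ =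
          -(((((k' + j : ℕ) : ℂ) + 1) * (((n : ℂ) + 2 * j) - ((k' + j : ℕ) : ℂ)))) •
            ((ad ℂ L f) ^ (k' + j)) w := by
        rw [lie_zero, map_smul] at hkey
        linear_combination (norm := module) -hkey
      refine ⟨?_, ?_, ?_⟩
      · rw [hEw, shift_e hhe, ih1, lie_smul]; push_cast; module
      · have : k' + (j+1) + 1 = (k' + j + 1) + 1 := by omega
        rw [this, hEw, adf_pow_succ, heq, lie_smul, ← adf_pow_succ]
        have h4 : k' + j + 1 = k' + j + 1 := rfl
        rw [show ((ad ℂ L f) ^ (k' + j + 1)) w = 0 from ih2, smul_zero]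
      · have : k' + (j+1) = k' + j + 1 := by omega
        rw [this, hEw, heq]
        exact smul_ne_zero (neg_ne_zero.mpr hc) ih3
  -- now infinitely many eigenvalues
  refine no_infinite_eigen (fun j => (n : ℂ) + 2 * j) ?_ (fun j => ((ad ℂ L e) ^ j) a)
    (fun j => ?_) (fun j => (inv j).1)
  · intro i j hij
    have : (2 : ℂ) * i = 2 * j := by linear_combination hij
    have : (i : ℂ) = j := by linear_combination this / 2
    exact_mod_cast this
  · intro hz
    exact (inv j).2.2 (by rw [show ((ad ℂ L e) ^ j) a = 0 from hz, map_zero])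


end Sl2Work

open Module LieAlgebra LieModule Sl2Work


/-- For an `sl(2)`-triple `(e,h,f)` in a finite-dimensional complex Lie algebra with a
nondegenerate invariant symmetric bilinear form `B` and a positive integer `n`, the bilinear
form `⟨a,b⟩ = B((ad f)^n a, b)` on the eigenspace `𝔤_n` of `ad h` is nondegenerate,
satisfies `⟨b,a⟩ = (-1)^n ⟨a,b⟩`, and is invariant under `ad v` for every `v`
centralizing `h` and `f`. -/
theorem form_on_ad_h_eigenspace
    (L : Type) [LieRing L] [LieAlgebra ℂ L] [FiniteDimensional ℂ L]
    (B : L →ₗ[ℂ] L →ₗ[ℂ] ℂ)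
    (hBsymm : ∀ a b : L, B a b = B b a)
    (hBinv : ∀ a b c : L, B ⁅a, b⁆ c = B a ⁅b, c⁆)
    (hBnd : ∀ a : L, (∀ b : L, B a b = 0) → a = 0)
    (e h f : L)
    (hhe : ⁅h, e⁆ = (2 : ℂ) • e)
    (hhf : ⁅h, f⁆ = -((2 : ℂ) • f))
    (hef : ⁅e, f⁆ = h)
    (n : ℕ) (hn : 0 < n) :
    -- (i) nondegeneracy on 𝔤ₙ
    (∀ a : Module.End.eigenspace (LieAlgebra.ad ℂ L h) (n : ℂ),
      (∀ b : Module.End.eigenspace (LieAlgebra.ad ℂ L h) (n : ℂ),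
        B (((LieAlgebra.ad ℂ L f) ^ n) (a : L)) (b : L) = 0) → a = 0) ∧
    -- (ii) (skew-)symmetry
    (∀ a b : Module.End.eigenspace (LieAlgebra.ad ℂ L h) (n : ℂ),
      B (((LieAlgebra.ad ℂ L f) ^ n) (b : L)) (a : L) =
        (-1 : ℂ) ^ n * B (((LieAlgebra.ad ℂ L f) ^ n) (a : L)) (b : L)) ∧
    -- (iii) invariance under the action of the centralizer of {h, f}
    (∀ v : L, ⁅h, v⁆ = 0 → ⁅f, v⁆ = 0 →
      ∀ a b : Module.End.eigenspace (LieAlgebra.ad ℂ L h) (n : ℂ),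
        B (((LieAlgebra.ad ℂ L f) ^ n) ⁅v, (a : L)⁆) (b : L) +
          B (((LieAlgebra.ad ℂ L f) ^ n) (a : L)) ⁅v, (b : L)⁆ = 0) := by
  classical
  have hmove : ∀ (k : ℕ) (x y : L),
      B (((ad ℂ L f) ^ k) x) y = (-1 : ℂ) ^ k * B x (((ad ℂ L f) ^ k) y) := by
    intro k
    induction k with
    | zero => intro x y; simp
    | succ k ih =>
      intro x y
      have h1 : ((ad ℂ L f) ^ (k+1)) x = ((ad ℂ L f) ^ k) ⁅f, x⁆ := by
        rw [pow_succ, Module.End.mul_apply, ad_apply]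
      have h2 : B ⁅f, x⁆ (((ad ℂ L f) ^ k) y) = - B x ⁅f, ((ad ℂ L f) ^ k) y⁆ := by
        rw [← lie_skew f x, map_neg, LinearMap.neg_apply, hBinv]
      rw [h1, ih ⁅f, x⁆ y, h2, ← adf_pow_succ]
      ring
  refine ⟨?_, ?_, ?_⟩
  · -- (i)
    intro a hab
    by_cases hh : h = 0
    · have ha := a.2
      rw [Module.End.mem_eigenspace_iff] at ha
      rw [ad_apply] at ha
      have h3 : ⁅h, (a : L)⁆ = (0 : L) := by
        have h4 := congrArg (fun z : L => ⁅z, (a : L)⁆) hh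
        simpa using h4
      rw [h3] at ha
      have ha2 : (0 : L) = (n : ℂ) • (a : L) := ha
      have hcast : (n : ℂ) ≠ 0 := Nat.cast_ne_zero.mpr (by omega)
      have : (a : L) = 0 := by
        rcases smul_eq_zero.mp ha2.symm with hc | hx
        · exact absurd hc hcast
        · exact hx
      exact Subtype.ext (by simpa using this)
    · have ht : IsSl2Triple h e f := by
        refine ⟨hh, hef, ?_, ?_⟩
        · rw [hhe, ← Nat.cast_smul_eq_nsmul (R := ℂ)]; norm_num
        · rw [hhf, ← Nat.cast_smul_eq_nsmul (R := ℂ)]; norm_num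
      have ha : ⁅h, (a : L)⁆ = (n : ℂ) • (a : L) := by
        have h2 := a.2
        rw [Module.End.mem_eigenspace_iff] at h2
        rw [← ad_apply (R := ℂ)]
        exact h2
      set x := ((ad ℂ L f) ^ n) (a : L) with hxdef
      have hx : ⁅h, x⁆ = ((n : ℂ) - 2 * n) • x := shift_f_pow hhf ha n
      have hxall : ∀ y, B x y = 0 := by
        intro y
        have hy : y ∈ (⊤ : Submodule ℂ L) := Submodule.mem_top
        rw [← ker_sup_range hhe hhf hef ht (n : ℂ)] at hy
        obtain ⟨u, hu, w, hwmem, rfl⟩ := Submodule.mem_sup.mp hy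
        obtain ⟨z, rfl⟩ := hwmem
        rw [map_add]
        have hBu : B x u = 0 := by
          have hu1 := LinearMap.mem_ker.mp hu
          have hu2 : (ad ℂ L h) u - (n : ℂ) • u = 0 := by
            simpa [LinearMap.sub_apply] using hu1
          have hu3 : (ad ℂ L h) u = (n : ℂ) • u := by
            rw [sub_eq_zero] at hu2; exact hu2
          exact hab ⟨u, Module.End.mem_eigenspace_iff.mpr hu3⟩
        have hBz : B x (((ad ℂ L h : Module.End ℂ L) - (n : ℂ) • 1) z) = 0 := by
          have hexp : ((ad ℂ L h : Module.End ℂ L) - (n : ℂ) • 1) z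
              = ⁅h, z⁆ - (n : ℂ) • z := by
            simp [LinearMap.sub_apply, LinearMap.smul_apply]
          rw [hexp, map_sub, map_smul]
          have h1 : B ⁅x, h⁆ z = B x ⁅h, z⁆ := hBinv x h z
          have h2 : ⁅x, h⁆ = (n : ℂ) • x := by
            rw [← lie_skew, hx]
            module
          rw [← h1, h2, map_smul, LinearMap.smul_apply]
          simp
        rw [hBu, hBz, add_zero]
      have hx0 : x = 0 := hBnd x hxall
      have hfin : (a : L) = 0 := f_pow_inj hhe hhf hef n (a : L) ha hx0
      exact Subtype.ext (by simpa using hfin)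
  · -- (ii)
    intro a b
    rw [hmove n (b : L) (a : L), hBsymm (b : L)]
  · -- (iii)
    intro v hv1 hv2 a b
    have hcomm : ∀ (k : ℕ) (x : L),
        ((ad ℂ L f) ^ k) ⁅v, x⁆ = ⁅v, ((ad ℂ L f) ^ k) x⁆ := by
      intro k x
      induction k with
      | zero => simp
      | succ k ih =>
        rw [adf_pow_succ, ih, adf_pow_succ, leibniz_lie, hv2, zero_lie, zero_add]
    have h1 : B (((ad ℂ L f) ^ n) ⁅v, (a : L)⁆) (b : L)
        = - B (((ad ℂ L f) ^ n) (a : L)) ⁅v, (b : L)⁆ := by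
      rw [hcomm n (a : L), ← lie_skew v (((ad ℂ L f) ^ n) (a : L)), map_neg, LinearMap.neg_apply, hBinv]
    rw [h1]
    ring
end

section
/- Let M be an 𝔰𝔩₂(ℂ)-module and let v ∈ M be a nonzero vector with e·v = 0 and h·v = n·v for a negative real number n. Then the vectors f^k·v (k ∈ ℕ) are linearly independent, their span equals the submodule N of M generated by v, and N is a simple 𝔰𝔩₂(ℂ)-module. -/
/-- If `v ≠ 0` is a vector of an `𝔰𝔩₂(ℂ)`-module with `e·v = 0` and `h·v = n·v` for a
negative real number `n`, then the vectors `f^k·v` are linearly independent, their span is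
the submodule generated by `v`, and this submodule is simple. -/
theorem verma_submodule_of_negative_highest_weight
    (M : Type) [AddCommGroup M] [Module ℂ M]
    (E H F : Module.End ℂ M)
    (hHE : ⁅H, E⁆ = (2 : ℂ) • E)
    (hHF : ⁅H, F⁆ = -((2 : ℂ) • F))
    (hEF : ⁅E, F⁆ = H)
    (v : M) (hv : v ≠ 0) (n : ℝ) (hn : n < 0)
    (hEv : E v = 0) (hHv : H v = ((n : ℂ)) • v) :
    -- the vectors `f^k·v` are linearly independent
    LinearIndependent ℂ (fun k : ℕ => (F ^ k) v) ∧
    -- their span is a submodule (invariant under e, h, f) ...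
    (∀ m ∈ Submodule.span ℂ (Set.range fun k : ℕ => (F ^ k) v),
      E m ∈ Submodule.span ℂ (Set.range fun k : ℕ => (F ^ k) v) ∧
      H m ∈ Submodule.span ℂ (Set.range fun k : ℕ => (F ^ k) v) ∧
      F m ∈ Submodule.span ℂ (Set.range fun k : ℕ => (F ^ k) v)) ∧
    -- ... which is contained in every submodule containing `v`, i.e. it is the
    -- submodule generated by `v`
    (∀ p : Submodule ℂ M, v ∈ p →
      (∀ m ∈ p, E m ∈ p) → (∀ m ∈ p, H m ∈ p) → (∀ m ∈ p, F m ∈ p) →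
      Submodule.span ℂ (Set.range fun k : ℕ => (F ^ k) v) ≤ p) ∧
    -- and it is a simple `𝔰𝔩₂(ℂ)`-module
    (∀ p : Submodule ℂ M, p ≤ Submodule.span ℂ (Set.range fun k : ℕ => (F ^ k) v) →
      (∀ m ∈ p, E m ∈ p) → (∀ m ∈ p, H m ∈ p) → (∀ m ∈ p, F m ∈ p) →
      p = ⊥ ∨ p = Submodule.span ℂ (Set.range fun k : ℕ => (F ^ k) v)) := by
  -- basic commutation relations applied to vectors
  have hHFx : ∀ x : M, H (F x) = F (H x) - (2 : ℂ) • F x := by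
    intro x
    have := congrArg (fun (T : Module.End ℂ M) => T x) hHF
    simp only [Ring.lie_def, LinearMap.sub_apply, Module.End.mul_apply, LinearMap.neg_apply,
      LinearMap.smul_apply] at this
    linear_combination (norm := module) this
  have hEFx : ∀ x : M, E (F x) = F (E x) + H x := by
    intro x
    have := congrArg (fun (T : Module.End ℂ M) => T x) hEF
    simp only [Ring.lie_def, LinearMap.sub_apply, Module.End.mul_apply] at this
    linear_combination (norm := module) this
  -- eigenvalue computation for H
  have hH : ∀ k : ℕ, H ((F ^ k) v) = ((n : ℂ) - 2 * k) • (F ^ k) v := by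
    intro k
    induction k with
    | zero => simpa using hHv
    | succ k ih =>
      have h1 : (F ^ (k + 1)) v = F ((F ^ k) v) := by
        rw [pow_succ']; rfl
      rw [h1, hHFx, ih, map_smul]
      push_cast
      module
  -- action of E
  have hE : ∀ k : ℕ, E ((F ^ (k + 1)) v) = ((k + 1 : ℂ) * ((n : ℂ) - k)) • (F ^ k) v := by
    intro k
    induction k with
    | zero =>
      have h1 : (F ^ 1) v = F v := by simp
      rw [h1, hEFx, hEv, hHv]
      simp
    | succ k ih =>
      have h1 : (F ^ (k + 2)) v = F ((F ^ (k + 1)) v) := by rw [pow_succ']; rfl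
      have h2 : (F ^ (k + 1)) v = F ((F ^ k) v) := by rw [pow_succ']; rfl
      rw [h1, hEFx, ih, map_smul, hH (k + 1), ← h2]
      push_cast
      module
  -- the coefficients are nonzero
  have hc : ∀ k : ℕ, ((k + 1 : ℂ) * ((n : ℂ) - k)) ≠ 0 := by
    intro k
    apply mul_ne_zero
    · have : ((k : ℂ) + 1) = ((k + 1 : ℕ) : ℂ) := by push_cast; ring
      rw [this]
      exact_mod_cast Nat.succ_ne_zero k
    · have : ((n : ℂ) - k) = ((n - k : ℝ) : ℂ) := by push_cast; ring
      rw [this]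
      simp only [ne_eq, Complex.ofReal_eq_zero]
      have : (0 : ℝ) ≤ k := Nat.cast_nonneg k
      nlinarith
  -- the vectors F^k v are nonzero
  have hnz : ∀ k : ℕ, (F ^ k) v ≠ 0 := by
    intro k
    induction k with
    | zero => simpa using hv
    | succ k ih =>
      intro h0
      have := hE k
      rw [h0, map_zero] at this
      exact ih (smul_eq_zero_iff_right (hc k) |>.mp this.symm)
  -- linear independence via eigenvectors of H
  have lin : LinearIndependent ℂ (fun k : ℕ => (F ^ k) v) := by
    apply H.eigenvectors_linearIndependent' (fun k : ℕ => (n : ℂ) - 2 * k)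
    · intro a b hab
      simp only [sub_right_inj] at hab
      have : (a : ℂ) = b := by
        field_simp at hab
        exact_mod_cast hab
      exact_mod_cast this
    · intro k
      exact ⟨Module.End.mem_eigenspace_iff.2 (hH k), hnz k⟩
  set S := Submodule.span ℂ (Set.range fun k : ℕ => (F ^ k) v) with hS
  have hmem : ∀ k : ℕ, (F ^ k) v ∈ S := fun k =>
    Submodule.subset_span ⟨k, rfl⟩
  -- invariance
  have hFinv : ∀ m ∈ S, F m ∈ S := by
    intro m hm
    induction hm using Submodule.span_induction with
    | mem x hx =>
      obtain ⟨k, rfl⟩ := hx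
      have : F ((F ^ k) v) = (F ^ (k + 1)) v := by rw [pow_succ']; rfl
      rw [this]; exact hmem _
    | zero => simp
    | add x y _ _ hx hy => rw [map_add]; exact S.add_mem hx hy
    | smul c x _ hx => rw [map_smul]; exact S.smul_mem c hx
  have hHinv : ∀ m ∈ S, H m ∈ S := by
    intro m hm
    induction hm using Submodule.span_induction with
    | mem x hx =>
      obtain ⟨k, rfl⟩ := hx
      rw [hH k]; exact S.smul_mem _ (hmem k)
    | zero => simp
    | add x y _ _ hx hy => rw [map_add]; exact S.add_mem hx hy
    | smul c x _ hx => rw [map_smul]; exact S.smul_mem c hx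
  have hEinv : ∀ m ∈ S, E m ∈ S := by
    intro m hm
    induction hm using Submodule.span_induction with
    | mem x hx =>
      obtain ⟨k, rfl⟩ := hx
      cases k with
      | zero => simp only [pow_zero, Module.End.one_apply, hEv]; exact S.zero_mem
      | succ k => rw [hE k]; exact S.smul_mem _ (hmem k)
    | zero => simp
    | add x y _ _ hx hy => rw [map_add]; exact S.add_mem hx hy
    | smul c x _ hx => rw [map_smul]; exact S.smul_mem c hx
  -- minimality
  have hmin : ∀ p : Submodule ℂ M, v ∈ p →
      (∀ m ∈ p, E m ∈ p) → (∀ m ∈ p, H m ∈ p) → (∀ m ∈ p, F m ∈ p) → S ≤ p := by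
    intro p hvp _ _ hFp
    rw [hS, Submodule.span_le]
    rintro _ ⟨k, rfl⟩
    induction k with
    | zero => simpa using hvp
    | succ k ih =>
      show (F ^ (k + 1)) v ∈ p
      have : (F ^ (k + 1)) v = F ((F ^ k) v) := by rw [pow_succ']; rfl
      rw [this]
      exact hFp _ ih
  refine ⟨lin, fun m hm => ⟨hEinv m hm, hHinv m hm, hFinv m hm⟩, hmin, ?_⟩
  -- simplicity
  intro p hpS hEp hHp hFp
  by_cases hbot : p = ⊥
  · exact Or.inl hbot
  right
  -- key: E^m kills F^k v for k < m, and E^k (F^k v) is a nonzero multiple of v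
  have hkill : ∀ k m : ℕ, k < m → (E ^ m) ((F ^ k) v) = 0 := by
    intro k
    induction k with
    | zero =>
      intro m hm
      obtain ⟨m', rfl⟩ : ∃ m', m = m' + 1 := ⟨m - 1, by omega⟩
      have : (E ^ (m' + 1)) ((F ^ 0) v) = (E ^ m') (E v) := by rw [pow_succ]; rfl
      simp only [pow_zero, Module.End.one_apply] at this ⊢
      rw [this, hEv, map_zero]
    | succ k ih =>
      intro m hm
      obtain ⟨m', rfl⟩ : ∃ m', m = m' + 1 := ⟨m - 1, by omega⟩
      have h1 : (E ^ (m' + 1)) ((F ^ (k + 1)) v) = (E ^ m') (E ((F ^ (k + 1)) v)) := by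
        rw [pow_succ]; rfl
      rw [h1, hE k, map_smul, ih m' (by omega), smul_zero]
  have hdiag : ∀ k : ℕ, ∃ d : ℂ, d ≠ 0 ∧ (E ^ k) ((F ^ k) v) = d • v := by
    intro k
    induction k with
    | zero => exact ⟨1, one_ne_zero, by simp⟩
    | succ k ih =>
      obtain ⟨d, hd, hdv⟩ := ih
      refine ⟨((k + 1 : ℂ) * ((n : ℂ) - k)) * d, mul_ne_zero (hc k) hd, ?_⟩
      have h1 : (E ^ (k + 1)) ((F ^ (k + 1)) v) = (E ^ k) (E ((F ^ (k + 1)) v)) := by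
        rw [pow_succ]; rfl
      rw [h1, hE k, map_smul, hdv, smul_smul]
  -- p contains v
  obtain ⟨x, hxp, hx0⟩ : ∃ x ∈ p, x ≠ 0 := by
    by_contra h
    push_neg at h
    exact hbot (by ext y; simpa using ⟨fun hy => h y hy, fun hy => hy ▸ p.zero_mem⟩)
  have hxS : x ∈ S := hpS hxp
  obtain ⟨c, hcx⟩ := Finsupp.mem_span_range_iff_exists_finsupp.mp hxS
  have hcne : c ≠ 0 := by
    rintro rfl
    simp at hcx
    exact hx0 hcx.symm
  have hsupp : c.support.Nonempty := Finsupp.support_nonempty_iff.mpr hcne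
  set K := c.support.max' hsupp with hK
  have hKmem : K ∈ c.support := c.support.max'_mem hsupp
  have hcK : c K ≠ 0 := Finsupp.mem_support_iff.mp hKmem
  obtain ⟨d, hd, hdv⟩ := hdiag K
  have hEKx : (E ^ K) x = (c K * d) • v := by
    rw [← hcx, Finsupp.sum, map_sum]
    rw [Finset.sum_eq_single K]
    · rw [map_smul, hdv, smul_smul]
    · intro k hk hkK
      have hklt : k < K := lt_of_le_of_ne (c.support.le_max' k hk) hkK
      rw [map_smul, hkill k K hklt, smul_zero]
    · intro h; exact absurd hKmem h
  have hEKp : (E ^ K) x ∈ p := by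
    clear hEKx
    induction K with
    | zero => simpa using hxp
    | succ k ih =>
      have : (E ^ (k + 1)) x = E ((E ^ k) x) := by rw [pow_succ']; rfl
      rw [this]
      exact hEp _ ih
  have hvp : v ∈ p := by
    have : ((c K * d)⁻¹ * (c K * d)) • v ∈ p := by
      rw [mul_smul, ← hEKx]
      exact p.smul_mem _ hEKp
    rwa [inv_mul_cancel₀ (mul_ne_zero hcK hd), one_smul] at this
  exact le_antisymm hpS (hmin p hvp hEp hHp hFp)
end

section
/- Let M be a nonzero 𝔰𝔩₂(ℂ)-module on which h acts diagonalizably with all eigenvalues negative real numbers. Then the space of e-invariants M^e = {m ∈ M : e·m = 0} is nonzero. -/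
/-- A nonzero `𝔰𝔩₂(ℂ)`-module on which `h` acts diagonalizably with all eigenvalues
negative real numbers has a nonzero `e`-invariant vector. -/
theorem exists_nonzero_e_invariant
    (M : Type) [AddCommGroup M] [Module ℂ M] [Nontrivial M]
    (E H F : Module.End ℂ M)
    (hHE : ⁅H, E⁆ = (2 : ℂ) • E)
    (hHF : ⁅H, F⁆ = -((2 : ℂ) • F))
    (hEF : ⁅E, F⁆ = H)
    (hdiag : (⨆ μ : ℂ, H.eigenspace μ) = ⊤)
    (hneg : ∀ μ : ℂ, Module.End.HasEigenvalue H μ → ∃ r : ℝ, r < 0 ∧ μ = (r : ℂ)) :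
    ∃ m : M, m ≠ 0 ∧ E m = 0 := by
  -- there exists an eigenvalue
  have hex : ∃ μ : ℂ, Module.End.HasEigenvalue H μ := by
    by_contra hc
    push_neg at hc
    have hbot : (⨆ μ : ℂ, H.eigenspace μ) = ⊥ := by
      rw [iSup_eq_bot]
      intro μ
      have := hc μ
      rw [Module.End.hasEigenvalue_iff, not_not] at this
      exact this
    obtain ⟨x, hx⟩ := exists_ne (0 : M)
    have : x ∈ (⊥ : Submodule ℂ M) := by
      rw [← hbot, hdiag]; trivial
    exact hx (by simpa using this)
  obtain ⟨μ, hμ⟩ := hex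
  obtain ⟨m, hmem, hm0⟩ := hμ.exists_hasEigenvector
  have hm : H m = μ • m := by
    rw [Module.End.mem_eigenspace_iff] at hmem; exact hmem
  -- commutation relation as a ring identity
  have hcomm : ∀ v : M, H (E v) = E (H v) + (2 : ℂ) • E v := by
    intro v
    have : (H * E) v = (E * H + (2 : ℂ) • E) v := by
      rw [show H * E = E * H + (2 : ℂ) • E by
        have := hHE
        rw [Ring.lie_def] at this
        linear_combination (norm := module) this]
    simpa using this
  -- E^k m is an eigenvector with eigenvalue μ + 2k (or zero)
  have key : ∀ k : ℕ, H ((E ^ k) m) = (μ + 2 * k) • (E ^ k) m := by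
    intro k
    induction k with
    | zero => simpa using hm
    | succ n ih =>
      have hp : (E ^ (n + 1)) m = E ((E ^ n) m) := by
        rw [pow_succ']; rfl
      rw [hp, hcomm, ih, map_smul]
      push_cast
      module
  obtain ⟨r, hr0, hrμ⟩ := hneg μ hμ
  -- find k with E^k m = 0
  have hkill : ∃ k : ℕ, (E ^ k) m = 0 := by
    refine ⟨⌈-r / 2⌉₊ + 1, ?_⟩
    by_contra hne
    set k := ⌈-r / 2⌉₊ + 1
    have hev : Module.End.HasEigenvalue H (μ + 2 * k) :=
      Module.End.hasEigenvalue_of_hasEigenvector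
        ⟨Module.End.mem_eigenspace_iff.mpr (key k), hne⟩
    obtain ⟨s, hs0, hsμ⟩ := hneg _ hev
    have hre : r + 2 * (k : ℝ) = s := by
      have := congrArg Complex.re hsμ
      simp [hrμ] at this
      linarith [this]
    have hk : -r / 2 ≤ (⌈-r / 2⌉₊ : ℝ) := Nat.le_ceil _
    have : (0 : ℝ) < r + 2 * (k : ℝ) := by
      have : (k : ℝ) = (⌈-r / 2⌉₊ : ℝ) + 1 := by push_cast [k]; ring
      nlinarith
    linarith
  -- take the least such k
  classical
  let k := Nat.find hkill
  have hk0 : k ≠ 0 := by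
    intro h
    have := Nat.find_spec hkill
    rw [show Nat.find hkill = k from rfl, h] at this
    simp at this
    exact hm0 this
  obtain ⟨n, hn⟩ := Nat.exists_eq_succ_of_ne_zero hk0
  refine ⟨(E ^ n) m, ?_, ?_⟩
  · exact Nat.find_min hkill (by omega)
  · have := Nat.find_spec hkill
    rw [show Nat.find hkill = k from rfl, hn, pow_succ'] at this
    exact this
end

section
/- Let M be a module over 𝔰𝔩₂(ℂ) such that h acts diagonalizably on M, every eigenvalue of h on M is a negative real number, and every h-eigenspace is finite-dimensional. Then M is generated as an 𝔰𝔩₂(ℂ)-module by its e-invariants, i.e. the smallest submodule of M containing M^e = {m ∈ M : e·m = 0} is M itself. -/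
/-- An `𝔰𝔩₂(ℂ)`-module on which `h` acts diagonalizably with negative real eigenvalues
and finite-dimensional eigenspaces is generated by its `e`-invariants: the smallest
submodule containing `M^e = {m : e·m = 0}` is `M` itself. -/
theorem generated_by_e_invariants
    (M : Type) [AddCommGroup M] [Module ℂ M]
    (E H F : Module.End ℂ M)
    (hHE : ⁅H, E⁆ = (2 : ℂ) • E)
    (hHF : ⁅H, F⁆ = -((2 : ℂ) • F))
    (hEF : ⁅E, F⁆ = H)
    (hdiag : (⨆ μ : ℂ, H.eigenspace μ) = ⊤)
    (hneg : ∀ μ : ℂ, Module.End.HasEigenvalue H μ → ∃ r : ℝ, r < 0 ∧ μ = (r : ℂ))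
    (hfin : ∀ μ : ℂ, FiniteDimensional ℂ (H.eigenspace μ)) :
    sInf {p : Submodule ℂ M | (∀ m : M, E m = 0 → m ∈ p) ∧
      (∀ m ∈ p, E m ∈ p) ∧ (∀ m ∈ p, H m ∈ p) ∧ (∀ m ∈ p, F m ∈ p)} = ⊤ := by
  set P := sInf {p : Submodule ℂ M | (∀ m : M, E m = 0 → m ∈ p) ∧
      (∀ m ∈ p, E m ∈ p) ∧ (∀ m ∈ p, H m ∈ p) ∧ (∀ m ∈ p, F m ∈ p)} with hPdef
  -- closure properties of P
  have hker : ∀ m : M, E m = 0 → m ∈ P := by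
    intro m hm
    rw [hPdef, Submodule.mem_sInf]
    exact fun q hq => hq.1 m hm
  have hFP : ∀ m ∈ P, F m ∈ P := by
    intro m hm
    rw [hPdef, Submodule.mem_sInf] at hm ⊢
    exact fun q hq => hq.2.2.2 m (hm q hq)
  have hFpow : ∀ (j : ℕ), ∀ m ∈ P, (F ^ j) m ∈ P := by
    intro j
    induction j with
    | zero => intro m hm; simpa using hm
    | succ j ih =>
      intro m hm
      rw [pow_succ, Module.End.mul_apply]
      exact ih _ (hFP m hm)
  -- pointwise commutation relations
  have hHE' : ∀ m : M, H (E m) = E (H m) + (2 : ℂ) • E m := by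
    intro m
    have h := LinearMap.ext_iff.mp hHE m
    simp only [Ring.lie_def, LinearMap.sub_apply, Module.End.mul_apply,
      LinearMap.smul_apply] at h
    rw [sub_eq_iff_eq_add] at h
    rw [h]; abel
  have hHF' : ∀ m : M, H (F m) = F (H m) - (2 : ℂ) • F m := by
    intro m
    have h := LinearMap.ext_iff.mp hHF m
    simp only [Ring.lie_def, LinearMap.sub_apply, Module.End.mul_apply,
      LinearMap.neg_apply, LinearMap.smul_apply] at h
    rw [sub_eq_iff_eq_add] at h
    rw [h]; abel
  have hEF' : ∀ m : M, E (F m) = F (E m) + H m := by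
    intro m
    have h := LinearMap.ext_iff.mp hEF m
    simp only [Ring.lie_def, LinearMap.sub_apply, Module.End.mul_apply] at h
    rw [sub_eq_iff_eq_add] at h
    rw [h]; abel
  -- weights of E^j m and F^j m
  have weightE : ∀ (j : ℕ) (μ : ℂ) (m : M), H m = μ • m →
      H ((E ^ j) m) = (μ + 2 * j) • (E ^ j) m := by
    intro j
    induction j with
    | zero => intro μ m hm; simpa using hm
    | succ j ih =>
      intro μ m hm
      rw [pow_succ', Module.End.mul_apply, hHE' ((E ^ j) m), ih μ m hm, map_smul,
        ← add_smul]
      congr 1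
      push_cast
      ring
  have weightF : ∀ (j : ℕ) (ν : ℂ) (w : M), H w = ν • w →
      H ((F ^ j) w) = (ν - 2 * j) • (F ^ j) w := by
    intro j
    induction j with
    | zero => intro ν w hw; simpa using hw
    | succ j ih =>
      intro ν w hw
      rw [pow_succ', Module.End.mul_apply, hHF' ((F ^ j) w), ih ν w hw, map_smul,
        ← sub_smul]
      congr 1
      push_cast
      ring
  -- key commutation formula: E ∘ F^{j+1} on an eigenvector
  have keyEF : ∀ (j : ℕ) (ν : ℂ) (w : M), H w = ν • w →
      E ((F ^ (j + 1)) w) = (F ^ (j + 1)) (E w) + (((j : ℂ) + 1) * (ν - j)) • (F ^ j) w := by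
    intro j
    induction j with
    | zero =>
      intro ν w hw
      simp only [zero_add, pow_one, pow_zero, Module.End.one_apply, Nat.cast_zero]
      rw [hEF' w, hw]
      norm_num
    | succ j ih =>
      intro ν w hw
      have h1 : (F ^ (j + 2)) w = F ((F ^ (j + 1)) w) := by
        rw [pow_succ' F (j + 1), Module.End.mul_apply]
      have h2 : F ((F ^ (j + 1)) (E w)) = (F ^ (j + 2)) (E w) := by
        rw [pow_succ' F (j + 1), Module.End.mul_apply]
      rw [h1, hEF' ((F ^ (j + 1)) w), ih ν w hw, map_add, map_smul, h2,
        weightF (j + 1) ν w hw]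
      have h3 : F ((F ^ j) w) = (F ^ (j + 1)) w := by
        rw [pow_succ' F j, Module.End.mul_apply]
      rw [h3, add_assoc, ← add_smul]
      congr 2
      push_cast
      ring
  -- local nilpotency of E on eigenvectors
  have nilp : ∀ (μ : ℂ) (m : M), H m = μ • m → ∃ n : ℕ, (E ^ n) m = 0 := by
    intro μ m hm
    rcases eq_or_ne m 0 with rfl | hm0
    · exact ⟨0, by simp⟩
    have hev : Module.End.HasEigenvalue H μ :=
      Module.End.hasEigenvalue_of_hasEigenvector
        ⟨Module.End.mem_eigenspace_iff.mpr hm, hm0⟩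
    obtain ⟨r, hr, rfl⟩ := hneg μ hev
    refine ⟨⌈-r⌉₊, ?_⟩
    by_contra hne
    have hev2 : Module.End.HasEigenvalue H ((r : ℂ) + 2 * (⌈-r⌉₊ : ℕ)) :=
      Module.End.hasEigenvalue_of_hasEigenvector
        ⟨Module.End.mem_eigenspace_iff.mpr (weightE _ _ m hm), hne⟩
    obtain ⟨r', hr', heq⟩ := hneg _ hev2
    have h1 : r + 2 * (⌈-r⌉₊ : ℝ) = r' := by exact_mod_cast heq
    have hceil : (-r) ≤ (⌈-r⌉₊ : ℝ) := Nat.le_ceil _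
    linarith
  -- main claim, by strong induction on the nilpotency order
  have main : ∀ (n : ℕ) (μ : ℂ) (m : M), H m = μ • m → (E ^ n) m = 0 → m ∈ P := by
    intro n
    induction n using Nat.strong_induction_on with
    | _ n IH =>
      intro μ m hm hEn
      rcases eq_or_ne m 0 with rfl | hm0
      · exact zero_mem P
      have hn0 : n ≠ 0 := by
        rintro rfl
        rw [pow_zero, Module.End.one_apply] at hEn
        exact hm0 hEn
      obtain ⟨k, rfl⟩ : ∃ k, n = k + 1 := ⟨n - 1, by omega⟩
      have hev : Module.End.HasEigenvalue H μ :=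
        Module.End.hasEigenvalue_of_hasEigenvector
          ⟨Module.End.mem_eigenspace_iff.mpr hm, hm0⟩
      obtain ⟨r, hr, rfl⟩ := hneg μ hev
      -- E^j m ∈ P for 1 ≤ j
      have hmemEj : ∀ j : ℕ, 1 ≤ j → j ≤ k + 1 → (E ^ j) m ∈ P := by
        intro j hj1 hj2
        refine IH (k + 1 - j) (by omega) ((r : ℂ) + 2 * j) ((E ^ j) m)
          (weightE j _ m hm) ?_
        rw [← Module.End.mul_apply, ← pow_add]
        have hjj : k + 1 - j + j = k + 1 := by omega
        rw [hjj]
        exact hEn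
      -- denominators are nonzero where needed
      have hden : ∀ i : ℕ, (E ^ (i + 1)) m ≠ 0 → ((r : ℂ) + i + 2) ≠ 0 := by
        intro i hne
        have hev2 : Module.End.HasEigenvalue H ((r : ℂ) + 2 * ((i + 1 : ℕ) : ℂ)) :=
          Module.End.hasEigenvalue_of_hasEigenvector
            ⟨Module.End.mem_eigenspace_iff.mpr (weightE (i + 1) _ m hm), hne⟩
        obtain ⟨r', hr', heq⟩ := hneg _ hev2
        have h1 : r + 2 * ((i : ℝ) + 1) = r' := by exact_mod_cast heq
        have h2 : (r : ℝ) + i + 2 < 0 := by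
          have hi : (0 : ℝ) ≤ (i : ℝ) := Nat.cast_nonneg i
          linarith
        intro h0
        have h3 : (r : ℝ) + i + 2 = 0 := by exact_mod_cast h0
        linarith
      -- the extremal projector coefficients
      set c : ℕ → ℂ := fun j =>
        Nat.rec 1 (fun i ci => -ci / (((i : ℂ) + 1) * ((r : ℂ) + i + 2))) j with hc
      have hc0 : c 0 = 1 := rfl
      have hcs : ∀ i, c (i + 1) = -c i / (((i : ℂ) + 1) * ((r : ℂ) + i + 2)) :=
        fun i => rfl
      set q : M := ∑ j ∈ Finset.range (k + 1), c j • (F ^ j) ((E ^ j) m) with hq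
      -- E q = 0
      have hEq : E q = 0 := by
        have e1 : E q = ∑ j ∈ Finset.range (k + 1), c j • E ((F ^ j) ((E ^ j) m)) := by
          rw [hq, map_sum]
          exact Finset.sum_congr rfl fun j _ => by rw [map_smul]
        rw [e1, Finset.sum_range_succ']
        have e2 : ∀ i ∈ Finset.range k,
            c (i + 1) • E ((F ^ (i + 1)) ((E ^ (i + 1)) m)) =
              c (i + 1) • (F ^ (i + 1)) ((E ^ (i + 2)) m) +
                (c (i + 1) * (((i : ℂ) + 1) * ((r : ℂ) + i + 2))) •
                  (F ^ i) ((E ^ (i + 1)) m) := by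
          intro i _
          rw [keyEF (i) ((r : ℂ) + 2 * ((i + 1 : ℕ) : ℂ)) ((E ^ (i + 1)) m)
            (weightE (i + 1) _ m hm)]
          have hE2 : E ((E ^ (i + 1)) m) = (E ^ (i + 2)) m := by
            rw [pow_succ' E (i + 1), Module.End.mul_apply]
          rw [hE2, smul_add, smul_smul]
          congr 3
          push_cast
          ring
        rw [Finset.sum_congr rfl e2, Finset.sum_add_distrib]
        have e3 : (∑ i ∈ Finset.range k, c (i + 1) • (F ^ (i + 1)) ((E ^ (i + 2)) m)) +
            c 0 • E ((F ^ 0) ((E ^ 0) m)) =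
            ∑ j ∈ Finset.range (k + 1), c j • (F ^ j) ((E ^ (j + 1)) m) := by
          rw [Finset.sum_range_succ']
          simp only [pow_zero, pow_one, Module.End.one_apply, zero_add]
        rw [add_right_comm, e3, Finset.sum_range_succ]
        have e4 : (E ^ (k + 1)) m = 0 := hEn
        rw [e4]
        simp only [map_zero, smul_zero, add_zero]
        rw [← Finset.sum_add_distrib]
        refine Finset.sum_eq_zero fun i _ => ?_
        rcases eq_or_ne ((E ^ (i + 1)) m) 0 with hz | hz
        · rw [hz]
          simp
        · rw [← add_smul]
          have hD : (((i : ℂ) + 1) * ((r : ℂ) + i + 2)) ≠ 0 := by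
            refine mul_ne_zero ?_ (hden i hz)
            intro h0
            have : ((i : ℂ) + 1) ≠ 0 := by
              exact_mod_cast Nat.cast_add_one_ne_zero (R := ℂ) i
            exact this h0
          have : c (i + 1) * (((i : ℂ) + 1) * ((r : ℂ) + i + 2)) = -c i := by
            rw [hcs i, div_mul_cancel₀]
            exact hD
          rw [this]
          simp
      -- conclude: m = q - (sum of terms in P)
      have hqP : q ∈ P := hker q hEq
      have hsplit : q = (∑ i ∈ Finset.range k, c (i + 1) • (F ^ (i + 1)) ((E ^ (i + 1)) m))
          + m := by
        rw [hq, Finset.sum_range_succ']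
        congr 1
        simp [hc0]
      have hsumP : (∑ i ∈ Finset.range k,
          c (i + 1) • (F ^ (i + 1)) ((E ^ (i + 1)) m)) ∈ P := by
        refine Submodule.sum_mem P fun i hi => Submodule.smul_mem P _ ?_
        refine hFpow (i + 1) _ (hmemEj (i + 1) (by omega) ?_)
        have := Finset.mem_range.mp hi
        omega
      have : m = q - ∑ i ∈ Finset.range k, c (i + 1) • (F ^ (i + 1)) ((E ^ (i + 1)) m) := by
        rw [hsplit]; abel
      rw [this]
      exact Submodule.sub_mem P hqP hsumP
  -- finish
  refine top_unique ?_
  rw [← hdiag]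
  refine iSup_le fun μ => ?_
  intro m hmμ
  have hm : H m = μ • m := Module.End.mem_eigenspace_iff.mp hmμ
  obtain ⟨n, hn⟩ := nilp μ m hm
  exact main n μ m hm hn
end

section
/- Let M be an 𝔰𝔩₂(ℂ)-module on which h acts diagonalizably with finite-dimensional eigenspaces. Then M is the internal direct sum, over c ∈ ℂ, of the generalized eigenspaces M^{(c)} = ⋃_{k≥1} ker(Ω - c)^k of the Casimir operator Ω, and each M^{(c)} is an 𝔰𝔩₂(ℂ)-submodule of M. -/
/-!
The Casimir element commutes with `e`, `h` and `f`, because `ad x` is a derivation of the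
associative algebra and the bracket relations make `⁅x, Ω⁆` cancel term by term. Hence `Ω`
preserves each `h`-eigenspace, which is finite-dimensional, so over `ℂ` each of them lies in the
span of the generalized eigenspaces of `Ω`. As the `h`-eigenspaces span `M`, so do the generalized
eigenspaces of `Ω`, which are always independent; and they are submodules since `Ω` commutes with
`e`, `h` and `f`.
-/

open Module End

theorem Ring.lie_mul {A : Type*} [Ring A] (a b c : A) :
    ⁅a, b * c⁆ = ⁅a, b⁆ * c + b * ⁅a, c⁆ := by
  simp only [Ring.lie_def]
  noncomm_ring

theorem Module.End.le_iSup_maxGenEigenspace_of_mapsTo {K V : Type*} [Field K] [IsAlgClosed K]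
    [AddCommGroup V] [Module K V] (f : End K V) (p : Submodule K V) [FiniteDimensional K p]
    (hp : ∀ x ∈ p, f x ∈ p) : p ≤ ⨆ μ, f.maxGenEigenspace μ :=
  calc p = (⨆ μ, maxGenEigenspace (f.restrict hp) μ).map p.subtype := by
          rw [iSup_maxGenEigenspace_eq_top, Submodule.map_subtype_top]
    _ = ⨆ μ, p ⊓ f.maxGenEigenspace μ := by
          simp only [Submodule.map_iSup, Submodule.inf_genEigenspace f p hp]
    _ ≤ ⨆ μ, f.maxGenEigenspace μ := iSup_mono fun _ ↦ inf_le_right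

section Casimir

attribute [local instance] LieRing.ofAssociativeRing

variable (K : Type*) {A : Type*} [Field K] [Ring A] [Algebra K A]

def sl2Casimir (e h f : A) : A := (2⁻¹ : K) • (h * h) + e * f + f * e

variable {K} {e h f : A}

theorem lie_sl2Casimir (x : A) :
    ⁅x, sl2Casimir K e h f⁆ = (2⁻¹ : K) • (⁅x, h⁆ * h + h * ⁅x, h⁆) +
      (⁅x, e⁆ * f + e * ⁅x, f⁆) + (⁅x, f⁆ * e + f * ⁅x, e⁆) := by
  simp only [sl2Casimir, lie_add, LieAlgebra.lie_smul, Ring.lie_mul]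

theorem sl2Casimir_commute_h (hhe : ⁅h, e⁆ = (2 : K) • e) (hhf : ⁅h, f⁆ = -((2 : K) • f)) :
    Commute (sl2Casimir K e h f) h := by
  rw [Commute.symm_iff, commute_iff_lie_eq, lie_sl2Casimir, lie_self, hhe, hhf]
  simp only [zero_mul, mul_zero, add_zero, smul_zero, smul_mul_assoc, mul_smul_comm, neg_mul,
    mul_neg]
  abel

variable [NeZero (2 : K)]

theorem sl2Casimir_commute_e (hhe : ⁅h, e⁆ = (2 : K) • e) (hef : ⁅e, f⁆ = h) :
    Commute (sl2Casimir K e h f) e := by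
  have heh : ⁅e, h⁆ = -((2 : K) • e) := by rw [← lie_skew, hhe]
  rw [Commute.symm_iff, commute_iff_lie_eq, lie_sl2Casimir, lie_self, heh, hef]
  simp only [zero_mul, mul_zero, zero_add, add_zero, smul_mul_assoc, mul_smul_comm, neg_mul,
    mul_neg, smul_neg, smul_add, smul_smul, inv_mul_cancel₀ (two_ne_zero (α := K)), one_smul]
  abel

theorem sl2Casimir_commute_f (hhf : ⁅h, f⁆ = -((2 : K) • f)) (hef : ⁅e, f⁆ = h) :
    Commute (sl2Casimir K e h f) f := by
  have hfh : ⁅f, h⁆ = (2 : K) • f := by rw [← lie_skew, hhf, neg_neg]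
  have hfe : ⁅f, e⁆ = -h := by rw [← lie_skew, hef]
  rw [Commute.symm_iff, commute_iff_lie_eq, lie_sl2Casimir, lie_self, hfh, hfe]
  simp only [zero_mul, mul_zero, zero_add, add_zero, smul_mul_assoc, mul_smul_comm, neg_mul,
    mul_neg, smul_add, smul_smul, inv_mul_cancel₀ (two_ne_zero (α := K)), one_smul]
  abel

end Casimir

/-- If `h` acts diagonalizably with finite-dimensional eigenspaces on an `𝔰𝔩₂(ℂ)`-module
`M`, then `M` is the internal direct sum over `c ∈ ℂ` of the generalized eigenspaces
`M^{(c)} = ⋃_k ker(Ω - c)^k` of the Casimir operator `Ω = ½h² + ef + fe`, and each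
`M^{(c)}` is an `𝔰𝔩₂(ℂ)`-submodule. -/
theorem casimir_generalized_eigenspace_decomposition
    (M : Type) [AddCommGroup M] [Module ℂ M]
    (E H F : Module.End ℂ M)
    (hHE : ⁅H, E⁆ = (2 : ℂ) • E)
    (hHF : ⁅H, F⁆ = -((2 : ℂ) • F))
    (hEF : ⁅E, F⁆ = H)
    (hdiag : (⨆ μ : ℂ, H.eigenspace μ) = ⊤)
    (hfin : ∀ μ : ℂ, FiniteDimensional ℂ (H.eigenspace μ)) :
    DirectSum.IsInternal (fun c : ℂ =>
      Module.End.maxGenEigenspace ((2⁻¹ : ℂ) • (H * H) + E * F + F * E) c) ∧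
    (∀ c : ℂ, ∀ m ∈ Module.End.maxGenEigenspace ((2⁻¹ : ℂ) • (H * H) + E * F + F * E) c,
      E m ∈ Module.End.maxGenEigenspace ((2⁻¹ : ℂ) • (H * H) + E * F + F * E) c ∧
      H m ∈ Module.End.maxGenEigenspace ((2⁻¹ : ℂ) • (H * H) + E * F + F * E) c ∧
      F m ∈ Module.End.maxGenEigenspace ((2⁻¹ : ℂ) • (H * H) + E * F + F * E) c) := by
  have hΩE : Commute (sl2Casimir ℂ E H F) E := sl2Casimir_commute_e hHE hEF
  have hΩH : Commute (sl2Casimir ℂ E H F) H := sl2Casimir_commute_h hHE hHF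
  have hΩF : Commute (sl2Casimir ℂ E H F) F := sl2Casimir_commute_f hHF hEF
  refine ⟨?_, fun c m hm ↦ ⟨mapsTo_maxGenEigenspace_of_comm hΩE c hm,
    mapsTo_maxGenEigenspace_of_comm hΩH c hm, mapsTo_maxGenEigenspace_of_comm hΩF c hm⟩⟩
  rw [DirectSum.isInternal_submodule_iff_iSupIndep_and_iSup_eq_top, ← top_le_iff, ← hdiag]
  refine ⟨independent_maxGenEigenspace _, iSup_le fun μ ↦ ?_⟩
  have := hfin μ
  exact le_iSup_maxGenEigenspace_of_mapsTo _ _ fun x hx ↦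
    mapsTo_genEigenspace_of_comm hΩH.symm μ 1 hx
end
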